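/- arXiv:1404.2824 — 8 statements merged into one kernel-verified Lean document; each statement's English description precedes it below -/
import Mathlib

section
/- There exists a constant C > 0 such that for all n ≥ 2, the number pnw(n) of prefix normal binary words of length n satisfies pnw(n) ≤ C · 2^n · (ln n)^2 / n. In particular, pnw(n) = o(2^n). -/
/-- A binary word (list of Booleans, `true` = 1) is prefix normal if no substring
has more 1s than the prefix of the same length. -/
def IsPrefixNormal (w : List Bool) : Prop :=
  ∀ u : List Bool, u <:+: w → u.count true ≤ (w.take u.length).count true

/-- The number of prefix normal words of length `n`. -/
noncomputable def pnw (n : ℕ) : ℕ :=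
  Nat.card {w : List Bool // w.length = n ∧ IsPrefixNormal w}

/-!
A prefix normal word of length `n` other than `1ⁿ` is `1ᵃ 0 v`, and since its prefix of length
`k = a + 1` holds only `a` ones, none of the `q = ⌊|v| / k⌋` aligned blocks of length `k` of `v`
consists of ones. Hence there are at most `(2ᵏ - 1)^q 2^(|v| mod k) ≤ 2ⁿ / (2ᵏ + q)` choices of
`v`, which is `O(k 2ⁿ / n)`, and also at most `2ⁿ / 2ᵏ`. Using the first bound for
`k ≤ log₂ n` and the second, a geometric series, for larger `k` gives `O(2ⁿ log² n / n)`.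
-/

theorem List.ncard_length_eq (α : Type*) [Fintype α] (n : ℕ) :
    {l : List α | l.length = n}.ncard = Fintype.card α ^ n := by
  rw [← Nat.card_coe_set_eq, ← card_vector, ← Nat.card_eq_fintype_card]
  rfl

def AlignedRunFree (k : ℕ) (v : List Bool) : Prop :=
  ∀ j, (j + 1) * k ≤ v.length → (v.drop (j * k)).take k ≠ List.replicate k true

theorem AlignedRunFree.of_append {k : ℕ} {u v : List Bool} (hu : u.length = k)
    (h : AlignedRunFree k (u ++ v)) : u ≠ List.replicate k true ∧ AlignedRunFree k v := by
  subst hu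
  refine ⟨fun hrep => h 0 (by simp) (by simpa), fun j hj => ?_⟩
  have := h (j + 1) (by simp; nlinarith)
  rwa [List.drop_append, List.drop_eq_nil_of_le (by nlinarith), List.nil_append,
    add_one_mul, Nat.add_sub_cancel] at this

def alignedRunFreeWords (k m : ℕ) : Set (List Bool) :=
  {v | v.length = m ∧ AlignedRunFree k v}

theorem finite_alignedRunFreeWords (k m : ℕ) : (alignedRunFreeWords k m).Finite :=
  (List.finite_length_eq Bool m).subset fun _ hv => hv.1

theorem ncard_alignedRunFreeWords_add_le (k m : ℕ) :
    (alignedRunFreeWords k (m + k)).ncard ≤ (2 ^ k - 1) * (alignedRunFreeWords k m).ncard := by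
  have hmaps : Set.MapsTo (fun v => (v.take k, v.drop k)) (alignedRunFreeWords k (m + k))
      (({u | u.length = k} \ {List.replicate k true}) ×ˢ alignedRunFreeWords k m) := by
    rintro v ⟨hlen, hv⟩
    have hu : (v.take k).length = k := by simp [hlen]
    rw [← List.take_append_drop k v] at hv
    obtain ⟨hne, hfree⟩ := hv.of_append hu
    exact ⟨⟨hu, hne⟩, by simp [hlen], hfree⟩
  have hinj : Set.InjOn (fun v => (v.take k, v.drop k)) (alignedRunFreeWords k (m + k)) :=
    fun v _ w _ h => by
      simpa using congrArg (fun p : List Bool × List Bool => p.1 ++ p.2) h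
  calc _ ≤ (({u | u.length = k} \ {List.replicate k true}) ×ˢ alignedRunFreeWords k m).ncard :=
        Set.ncard_le_ncard_of_injOn _ hmaps hinj
          (((List.finite_length_eq Bool k).sdiff).prod (finite_alignedRunFreeWords k m))
    _ = _ := by
      rw [Set.ncard_prod, Set.ncard_sdiff_singleton_of_mem (by simp), List.ncard_length_eq]
      simp

theorem ncard_alignedRunFreeWords_le (k m : ℕ) :
    (alignedRunFreeWords k m).ncard ≤ 2 ^ m := by
  simpa [List.ncard_length_eq] using
    Set.ncard_le_ncard (fun _ hv => hv.1) (List.finite_length_eq Bool m)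

theorem Nat.sub_one_mul_add_add_one_le (N q : ℕ) : (N - 1) * (N + (q + 1)) ≤ N * (N + q) := by
  cases N with
  | zero => simp
  | succ N => simp only [Nat.add_sub_cancel]; nlinarith

-- The discrete form of `(1 - x)^q ≤ 1 / (1 + q x)` for `x = 2⁻ᵏ`.
theorem ncard_alignedRunFreeWords_mul_le {k : ℕ} (hk : 0 < k) (m : ℕ) :
    (alignedRunFreeWords k m).ncard * (2 ^ k + m / k) ≤ 2 ^ (m + k) := by
  induction m using Nat.strong_induction_on with
  | _ m ih =>
  rcases lt_or_ge m k with hmk | hkm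
  · rw [Nat.div_eq_of_lt hmk, add_zero, pow_add]
    exact Nat.mul_le_mul_right _ (ncard_alignedRunFreeWords_le k m)
  obtain ⟨m, rfl⟩ := Nat.exists_eq_add_of_le' hkm
  set N := 2 ^ k
  set q := m / k
  set c := (alignedRunFreeWords k m).ncard
  calc (alignedRunFreeWords k (m + k)).ncard * (N + (m + k) / k)
      ≤ (N - 1) * c * (N + (q + 1)) := by
        rw [Nat.add_div_right _ hk]
        exact Nat.mul_le_mul_right _ (ncard_alignedRunFreeWords_add_le k m)
    _ = c * ((N - 1) * (N + (q + 1))) := by ring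
    _ ≤ c * (N * (N + q)) := Nat.mul_le_mul_left _ (Nat.sub_one_mul_add_add_one_le N q)
    _ = N * (c * (N + q)) := by ring
    _ ≤ N * 2 ^ (m + k) := Nat.mul_le_mul_left _ (ih m (by omega))
    _ = 2 ^ (m + k + k) := by rw [pow_add _ (m + k) k, mul_comm]

theorem add_mul_ncard_alignedRunFreeWords_le {k : ℕ} (hk : 0 < k) (m : ℕ) :
    (m + k) * (alignedRunFreeWords k m).ncard ≤ 2 * k * 2 ^ (m + k) := by
  have hm : m < k * (m / k + 1) := Nat.lt_mul_div_succ m hk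
  have hlen : m + k ≤ 2 * k * (2 ^ k + m / k) := by
    have h2k : m / k + 1 ≤ 2 ^ k + m / k := by have := Nat.one_le_two_pow (n := k); omega
    calc m + k ≤ k * (m / k + 1) + k * (m / k + 1) := by
          have : k ≤ k * (m / k + 1) := Nat.le_mul_of_pos_right k (Nat.succ_pos _); omega
      _ = 2 * k * (m / k + 1) := by ring
      _ ≤ 2 * k * (2 ^ k + m / k) := Nat.mul_le_mul_left _ h2k
  calc (m + k) * (alignedRunFreeWords k m).ncard
      ≤ 2 * k * ((alignedRunFreeWords k m).ncard * (2 ^ k + m / k)) := by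
        nlinarith [Nat.mul_le_mul_right (alignedRunFreeWords k m).ncard hlen]
    _ ≤ 2 * k * 2 ^ (m + k) := Nat.mul_le_mul_left _ (ncard_alignedRunFreeWords_mul_le hk m)

theorem List.eq_replicate_true_or_exists (w : List Bool) :
    w = List.replicate w.length true ∨ ∃ a v, w = List.replicate a true ++ false :: v := by
  induction w with
  | nil => simp
  | cons b w ih =>
    cases b with
    | false => exact Or.inr ⟨0, w, rfl⟩
    | true =>
      rcases ih with h | ⟨a, v, h⟩
      · exact Or.inl (by rw [List.length_cons, List.replicate_succ, ← h])
      · exact Or.inr ⟨a + 1, v, by rw [h, List.replicate_succ, List.cons_append]⟩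

theorem IsPrefixNormal.alignedRunFree {a : ℕ} {v : List Bool}
    (h : IsPrefixNormal (List.replicate a true ++ false :: v)) : AlignedRunFree (a + 1) v := by
  intro j _ hrun
  have hinfix : (v.drop (j * (a + 1))).take (a + 1) <:+:
      List.replicate a true ++ false :: v :=
    (List.take_prefix _ _).isInfix.trans <| (List.drop_suffix _ _).isInfix.trans <|
      ((List.suffix_cons false v).trans (List.suffix_append _ _)).isInfix
  have := h _ hinfix
  simp [hrun, List.take_append] at this

theorem setOf_isPrefixNormal_subset (n : ℕ) :
    {w : List Bool | w.length = n ∧ IsPrefixNormal w} ⊆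
      insert (List.replicate n true) (⋃ a ∈ Finset.range n, (fun v =>
        List.replicate a true ++ false :: v) '' alignedRunFreeWords (a + 1) (n - (a + 1))) := by
  rintro w ⟨rfl, hw⟩
  rcases w.eq_replicate_true_or_exists with h | ⟨a, v, rfl⟩
  · exact Or.inl h
  · exact Or.inr <| Set.mem_biUnion (x := a) (by simp)
      ⟨v, ⟨by simp; omega, hw.alignedRunFree⟩, rfl⟩

theorem pnw_le_one_add_sum (n : ℕ) :
    pnw n ≤ 1 + ∑ a ∈ Finset.range n, (alignedRunFreeWords (a + 1) (n - (a + 1))).ncard := by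
  have hfin := finite_alignedRunFreeWords
  calc pnw n = {w : List Bool | w.length = n ∧ IsPrefixNormal w}.ncard := rfl
    _ ≤ _ := Set.ncard_le_ncard (setOf_isPrefixNormal_subset n)
        ((Set.Finite.biUnion (Finset.finite_toSet _) fun _ _ => (hfin _ _).image _).insert _)
    _ ≤ 1 + _ := by rw [add_comm]; exact Set.ncard_insert_le _ _
    _ ≤ 1 + ∑ a ∈ Finset.range n, ((fun v => List.replicate a true ++ false :: v) ''
          alignedRunFreeWords (a + 1) (n - (a + 1))).ncard :=
        Nat.add_le_add_left (Finset.set_ncard_biUnion_le _ _) 1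
    _ ≤ _ := Nat.add_le_add_left (Finset.sum_le_sum fun _ _ => Set.ncard_image_le (hfin _ _)) 1

theorem one_add_sum_le_log_sq (n : ℕ) (hn : 2 ≤ n) (c : ℕ → ℝ)
    (hc_pow : ∀ a < n, c a ≤ 2 ^ n / 2 ^ (a + 1))
    (hc_lin : ∀ a < n, c a ≤ 2 * (a + 1) * 2 ^ n / n) :
    1 + ∑ a ∈ Finset.range n, c a ≤ 5 * (Nat.log 2 n : ℝ) ^ 2 * 2 ^ n / n := by
  set t := Nat.log 2 n
  set B : ℝ := 2 ^ n / n
  have hn0 : (0 : ℝ) < n := by positivity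
  have ht1 : (1 : ℝ) ≤ t := by exact_mod_cast Nat.log_pos (by norm_num) hn
  have htn : t ≤ n := Nat.log_le_self 2 n
  have hB : 1 ≤ B := by
    rw [le_div_iff₀ hn0, one_mul]; exact_mod_cast (Nat.lt_two_pow_self).le
  have hsmall : ∑ a ∈ Finset.range t, c a ≤ 2 * t ^ 2 * B := by
    have hterm : ∀ a ∈ Finset.range t, c a ≤ 2 * t * B := fun a ha => by
      have hat : (a : ℝ) + 1 ≤ t := by exact_mod_cast Finset.mem_range.mp ha
      calc c a ≤ 2 * (a + 1) * 2 ^ n / n := hc_lin a (by simp at ha; omega)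
        _ ≤ 2 * t * B := by rw [mul_div_assoc]; gcongr
    calc _ ≤ (Finset.range t).card • (2 * t * B) := Finset.sum_le_card_nsmul _ _ _ hterm
      _ = 2 * t ^ 2 * B := by rw [Finset.card_range, nsmul_eq_mul]; ring
  have hlarge : ∑ a ∈ Finset.Ico t n, c a ≤ 2 * B := by
    have hgeom : ∑ a ∈ Finset.Ico t n, (1 / 2 : ℝ) ^ a ≤ 2 / 2 ^ t := by
      calc _ ≤ (1 / 2 : ℝ) ^ t / (1 - 1 / 2) :=
            geom_sum_Ico_le_of_lt_one (by norm_num) (by norm_num)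
        _ = 2 / 2 ^ t := by rw [one_div_pow]; ring
    have hnt : (n : ℝ) ≤ 2 * 2 ^ t := by
      exact_mod_cast (Nat.lt_pow_succ_log_self (by norm_num) n).le.trans_eq (pow_succ' 2 t)
    calc ∑ a ∈ Finset.Ico t n, c a ≤ ∑ a ∈ Finset.Ico t n, 2 ^ n / 2 * (1 / 2 : ℝ) ^ a :=
          Finset.sum_le_sum fun a ha => (hc_pow a (Finset.mem_Ico.mp ha).2).trans_eq
            (by rw [one_div_pow, pow_succ]; field_simp)
      _ ≤ 2 ^ n / 2 * (2 / 2 ^ t) := by rw [← Finset.mul_sum]; gcongr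
      _ = 2 * (2 ^ n / (2 * 2 ^ t)) := by field_simp
      _ ≤ 2 * B := by gcongr; exact div_le_div_of_nonneg_left (by positivity) hn0 hnt
  have ht2 : 1 ≤ (t : ℝ) ^ 2 := one_le_pow₀ ht1
  rw [← Finset.sum_range_add_sum_Ico _ htn, mul_div_assoc]
  nlinarith

theorem pnw_le_log_sq {n : ℕ} (hn : 2 ≤ n) :
    (pnw n : ℝ) ≤ 5 / Real.log 2 ^ 2 * 2 ^ n * Real.log n ^ 2 / n := by
  set c : ℕ → ℕ := fun a => (alignedRunFreeWords (a + 1) (n - (a + 1))).ncard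
  have hc_pow : ∀ a < n, (c a : ℝ) ≤ 2 ^ n / 2 ^ (a + 1) := fun a ha => by
    calc (c a : ℝ) ≤ 2 ^ (n - (a + 1)) := by exact_mod_cast ncard_alignedRunFreeWords_le _ _
      _ = 2 ^ n / 2 ^ (a + 1) := by
        rw [eq_div_iff (by positivity), ← pow_add, Nat.sub_add_cancel ha]
  have hc_lin : ∀ a < n, (c a : ℝ) ≤ 2 * (a + 1) * 2 ^ n / n := fun a ha => by
    have h := add_mul_ncard_alignedRunFreeWords_le (Nat.succ_pos a) (n - (a + 1))
    rw [Nat.sub_add_cancel ha] at h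
    rw [le_div_iff₀ (by positivity), mul_comm]
    exact_mod_cast h
  have hlog : (Nat.log 2 n : ℝ) ≤ Real.log n / Real.log 2 := by
    simpa [Real.logb] using Real.natLog_le_logb n 2
  calc (pnw n : ℝ) ≤ 1 + ∑ a ∈ Finset.range n, (c a : ℝ) := by
        exact_mod_cast pnw_le_one_add_sum n
    _ ≤ 5 * (Nat.log 2 n : ℝ) ^ 2 * 2 ^ n / n := one_add_sum_le_log_sq n hn _ hc_pow hc_lin
    _ ≤ 5 * (Real.log n / Real.log 2) ^ 2 * 2 ^ n / n := by gcongr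
    _ = 5 / Real.log 2 ^ 2 * 2 ^ n * Real.log n ^ 2 / n := by ring

theorem pnw_upper_bound :
    (∃ C : ℝ, 0 < C ∧ ∀ n : ℕ, 2 ≤ n →
        (pnw n : ℝ) ≤ C * 2 ^ n * (Real.log n) ^ 2 / n) ∧
    Filter.Tendsto (fun n : ℕ => (pnw n : ℝ) / 2 ^ n) Filter.atTop (nhds 0) := by
  set C : ℝ := 5 / Real.log 2 ^ 2
  refine ⟨⟨C, by positivity, fun n hn => pnw_le_log_sq hn⟩, ?_⟩
  have hlog : Filter.Tendsto (fun n : ℕ => C * (Real.log n ^ 2 / n)) Filter.atTop (nhds 0) := by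
    simpa using ((Real.tendsto_pow_log_div_mul_add_atTop 1 0 2 one_ne_zero).comp
      tendsto_natCast_atTop_atTop).const_mul C
  refine squeeze_zero' (Filter.Eventually.of_forall fun n => by positivity)
    (Filter.eventually_atTop.mpr ⟨2, fun n hn => ?_⟩) hlog
  rw [div_le_iff₀ (by positivity)]
  calc (pnw n : ℝ) ≤ C * 2 ^ n * Real.log n ^ 2 / n := pnw_le_log_sq hn
    _ = C * (Real.log n ^ 2 / n) * 2 ^ n := by ring
end

section
/- Let w be a binary word of density d > 0 starting with 1, written as w = 1 0^(r₁−1) 1 0^(r₂−1) ⋯ 1 0^(r_d−1), where r₁,…,r_{d−1} ≥ 1 are the distances between consecutive occurrences of 1 and r_d ≥ 1 is chosen so that r₁ + r₂ + ⋯ + r_d = |w|. Then w is prefix normal if and only if for every m with 1 ≤ m ≤ d−2 and every j with 2 ≤ j ≤ d−m, we have r₁ + r₂ + ⋯ + r_m ≤ r_j + r_{j+1} + ⋯ + r_{j+m−1}. -/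
/-
Let the 1s of the word sit at positions `P 0 < P 1 < ⋯ < P (d - 1)`, where
`P k = r₁ + ⋯ + r_k`. The prefix of length `x` then contains `f x = #{k < d | P k < x}`
ones and the factor of length `l` starting at `a` contains `f (a + l) - f a`, so the word
is prefix normal iff `f` is subadditive. Since `f` is the counting function of the
increasing sequence `P`, it is subadditive iff `P` is superadditive, and with `b = j - 1`
the run inequalities say exactly `P m ≤ P (b + m) - P b`.
-/

open Finset

theorem isPrefixNormal_iff_count_take_add_le (w : List Bool) :
    IsPrefixNormal w ↔ ∀ a l, a + l ≤ w.length →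
      (w.take (a + l)).count true ≤ (w.take a).count true + (w.take l).count true := by
  constructor
  · intro hw a l hal
    have hinfix : (w.drop a).take l <:+: w :=
      (List.take_prefix l _).isInfix.trans (List.drop_suffix a w).isInfix
    have hlen : ((w.drop a).take l).length = l := by simp; omega
    rw [List.take_add, List.count_append]
    have hcount := hw _ hinfix
    rw [hlen] at hcount
    omega
  · rintro hw u ⟨s, t, rfl⟩
    have hsplit := hw s.length u.length (by simp)
    rwa [List.take_left' (by simp), List.append_assoc, List.take_left, List.count_append,
      ← List.append_assoc, Nat.add_le_add_iff_left] at hsplit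

def countBelow (P : ℕ → ℕ) (d x : ℕ) : ℕ := #{k ∈ range d | P k < x}

section countBelow

variable {P : ℕ → ℕ} {d : ℕ}

theorem countBelow_le (x : ℕ) : countBelow P d x ≤ d :=
  (card_filter_le _ _).trans_eq (card_range d)

theorem lt_countBelow (hP : MonotoneOn P (Set.Iic d)) {k x : ℕ} (hk : k < d) (hx : P k < x) :
    k < countBelow P d x := by
  have : range (k + 1) ⊆ {j ∈ range d | P j < x} := fun j hj => by
    rw [mem_range] at hj
    exact mem_filter.2 ⟨mem_range.2 (by omega),
      (hP (by simp; omega) (by simp; omega) (by omega)).trans_lt hx⟩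
  simpa [countBelow] using card_le_card this

theorem countBelow_le_of_le (hP : MonotoneOn P (Set.Iic d)) {k x : ℕ} (hx : x ≤ P k) :
    countBelow P d x ≤ k := by
  have : {j ∈ range d | P j < x} ⊆ range k := fun j hj => by
    rw [mem_filter, mem_range] at hj
    by_contra! hkj
    rw [mem_range, not_lt] at hkj
    exact (hx.trans (hP (by simp; omega) (by simp; omega) hkj)).not_gt hj.2
  simpa [countBelow] using card_le_card this

theorem countBelow_apply (hP : StrictMonoOn P (Set.Iic d)) {k : ℕ} (hk : k ≤ d) :
    countBelow P d (P k) = k := by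
  refine (countBelow_le_of_le hP.monotoneOn le_rfl).antisymm ?_
  rcases k with _ | k
  · exact Nat.zero_le _
  · exact lt_countBelow hP.monotoneOn (by omega)
      (hP (by simp; omega) (by simpa using hk) (Nat.lt_succ_self k))

theorem countBelow_apply_add_one (hP : StrictMonoOn P (Set.Iic d)) {k : ℕ} (hk : k < d) :
    countBelow P d (P k + 1) = k + 1 :=
  (countBelow_le_of_le hP.monotoneOn
      (hP (by simp; omega) (by simpa using hk) (Nat.lt_succ_self k))).antisymm
    (lt_countBelow hP.monotoneOn hk (Nat.lt_succ_self _))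

theorem countBelow_subadditive_iff (hP : StrictMonoOn P (Set.Iic d)) :
    (∀ a l, a + l ≤ P d → countBelow P d (a + l) ≤ countBelow P d a + countBelow P d l) ↔
      ∀ b m, b + m < d → P b + P m ≤ P (b + m) := by
  constructor
  · intro hsub b m hbm
    have hPb : P b ≤ P (b + m) := hP.monotoneOn (by simp; omega) (by simp; omega) (by omega)
    have hPd : P (b + m) < P d := hP (by simp; omega) (by simp) hbm
    have hwindow := hsub (P b) (P (b + m) - P b + 1) (by omega)
    rw [show P b + (P (b + m) - P b + 1) = P (b + m) + 1 by omega,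
      countBelow_apply_add_one hP hbm, countBelow_apply hP (by omega)] at hwindow
    by_contra! hlt
    have := countBelow_le_of_le hP.monotoneOn (k := m) (x := P (b + m) - P b + 1) (by omega)
    omega
  · intro hsup a l hal
    set b := countBelow P d a
    set c := countBelow P d (a + l)
    by_cases hcb : c ≤ b
    · omega
    have hcd : c ≤ d := countBelow_le _
    -- the ones counted by `c` but not by `b` sit at `P b < ⋯ < P (c - 1)`, inside `[a, a + l)`
    have hPb : a ≤ P b := by
      by_contra! h
      exact (lt_countBelow hP.monotoneOn (by omega) h).ne rfl
    have hPc : P (c - 1) < a + l := by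
      by_contra! h
      have := countBelow_le_of_le hP.monotoneOn h
      omega
    have hgap := hsup b (c - 1 - b) (by omega)
    rw [show b + (c - 1 - b) = c - 1 by omega] at hgap
    have := lt_countBelow hP.monotoneOn (k := c - 1 - b) (x := l) (by omega) (by omega)
    omega

end countBelow

def runWord (r : ℕ → ℕ) (d : ℕ) : List Bool :=
  ((List.range d).map (fun i => true :: List.replicate (r (i + 1) - 1) false)).flatten

def runSum (r : ℕ → ℕ) (k : ℕ) : ℕ := ∑ i ∈ Icc 1 k, r i

section runs

variable {r : ℕ → ℕ} {d : ℕ}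

theorem runWord_succ (r : ℕ → ℕ) (d : ℕ) :
    runWord r (d + 1) = runWord r d ++ true :: List.replicate (r (d + 1) - 1) false := by
  simp [runWord, List.range_succ]

theorem runSum_succ (r : ℕ → ℕ) (k : ℕ) : runSum r (k + 1) = runSum r k + r (k + 1) :=
  sum_Icc_succ_top (by omega) r

theorem runSum_add_sum_Icc (r : ℕ → ℕ) {b c : ℕ} (hbc : b ≤ c) :
    runSum r b + ∑ i ∈ Icc (b + 1) c, r i = runSum r c := by
  have h := sum_Ioc_consecutive r (Nat.zero_le b) hbc
  rwa [← Icc_add_one_left_eq_Ioc, ← Icc_add_one_left_eq_Ioc, ← Icc_add_one_left_eq_Ioc,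
    zero_add] at h

theorem strictMonoOn_runSum (hr : ∀ i, 1 ≤ i → i ≤ d → 1 ≤ r i) :
    StrictMonoOn (runSum r) (Set.Iic d) :=
  strictMonoOn_Iic_of_lt_succ fun k hk => by
    rw [Order.succ_eq_add_one, runSum_succ]
    have := hr (k + 1) (by omega) hk
    omega

theorem length_runWord (hr : ∀ i, 1 ≤ i → i ≤ d → 1 ≤ r i) :
    (runWord r d).length = runSum r d := by
  induction d with
  | zero => rfl
  | succ d ih =>
    rw [runWord_succ, List.length_append, ih fun i hi hid => hr i hi (by omega), runSum_succ]
    have := hr (d + 1) (by omega) le_rfl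
    simp only [List.length_cons, List.length_replicate]
    omega

theorem count_take_runWord (hr : ∀ i, 1 ≤ i → i ≤ d → 1 ≤ r i) (x : ℕ) :
    ((runWord r d).take x).count true = countBelow (runSum r) d x := by
  induction d with
  | zero => simp [runWord, countBelow]
  | succ d ih =>
    have hr' : ∀ i, 1 ≤ i → i ≤ d → 1 ≤ r i := fun i hi hid => hr i hi (by omega)
    have hlast : ((true :: List.replicate (r (d + 1) - 1) false).take (x - runSum r d)).count true
        = if runSum r d < x then 1 else 0 := by
      split_ifs with h
      · obtain ⟨n, hn⟩ : ∃ n, x - runSum r d = n + 1 := Nat.exists_eq_add_one.2 (by omega)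
        simp [hn, List.count_replicate]
      · simp [Nat.sub_eq_zero_of_le (not_lt.1 h)]
    rw [runWord_succ, List.take_append, List.count_append, ih hr', length_runWord hr', hlast,
      countBelow, countBelow, range_add_one, filter_insert]
    split_ifs
    · rw [card_insert_of_notMem (by simp)]
    · rfl

end runs

theorem runSum_superadditive_iff (r : ℕ → ℕ) (d : ℕ) :
    (∀ b m, b + m < d → runSum r b + runSum r m ≤ runSum r (b + m)) ↔
      ∀ m j : ℕ, 1 ≤ m → m ≤ d - 2 → 2 ≤ j → j ≤ d - m →
        ∑ i ∈ Icc 1 m, r i ≤ ∑ i ∈ Icc j (j + m - 1), r i := by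
  have window (b m : ℕ) : runSum r (b + m) = runSum r b + ∑ i ∈ Icc (b + 1) (b + m), r i :=
    (runSum_add_sum_Icc r (by omega)).symm
  constructor
  · intro h m j hm hmd hj hjd
    have hsup := h (j - 1) m (by omega)
    rwa [window, Nat.add_le_add_iff_left, Nat.sub_add_cancel (by omega),
      ← Nat.sub_add_comm (by omega)] at hsup
  · intro h b m hbm
    rw [window, Nat.add_le_add_iff_left]
    rcases Nat.eq_zero_or_pos b with rfl | hb
    · simp [runSum]
    rcases Nat.eq_zero_or_pos m with rfl | hm
    · simp [runSum]
    have hrun := h m (b + 1) hm (by omega) (by omega) (by omega)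
    rwa [show b + 1 + m - 1 = b + m by omega] at hrun

theorem prefixNormal_iff_run_inequalities_general (d : ℕ) (r : ℕ → ℕ)
    (hr : ∀ i, 1 ≤ i → i ≤ d → 1 ≤ r i) :
    IsPrefixNormal (((List.range d).map
        (fun i => true :: List.replicate (r (i + 1) - 1) false)).flatten) ↔
      ∀ m j : ℕ, 1 ≤ m → m ≤ d - 2 → 2 ≤ j → j ≤ d - m →
        ∑ i ∈ Finset.Icc 1 m, r i ≤ ∑ i ∈ Finset.Icc j (j + m - 1), r i := by
  change IsPrefixNormal (runWord r d) ↔ _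
  simp only [isPrefixNormal_iff_count_take_add_le, length_runWord hr, count_take_runWord hr]
  rw [countBelow_subadditive_iff (strictMonoOn_runSum hr), runSum_superadditive_iff]

theorem prefixNormal_iff_run_inequalities (d : ℕ) (hd : 0 < d) (r : ℕ → ℕ)
    (hr : ∀ i, 1 ≤ i → i ≤ d → 1 ≤ r i) :
    IsPrefixNormal (((List.range d).map
        (fun i => true :: List.replicate (r (i + 1) - 1) false)).flatten) ↔
      ∀ m j : ℕ, 1 ≤ m → m ≤ d - 2 → 2 ≤ j → j ≤ d - m →
        ∑ i ∈ Finset.Icc 1 m, r i ≤ ∑ i ∈ Finset.Icc j (j + m - 1), r i :=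
  prefixNormal_iff_run_inequalities_general d r hr
end

section
/- The generating function of the numbers pnw(n,6) satisfies the formal power series identity (1 − x⁵)·(1 − x³)·(1 − x²)·(1 − x)³ · ∑_{n≥1} pnw(n,6)·xⁿ = x⁶·(1 + x + x² + x³) (in the ring of formal power series over the integers). -/
/-- The number of prefix normal words of length `n` and density `d` (number of 1s). -/
noncomputable def pnwd (n d : ℕ) : ℕ :=
  Nat.card {w : List Bool // w.length = n ∧ w.count true = d ∧ IsPrefixNormal w}

/-!
A prefix normal word of density 6 starts with a `1`, so it is
`1 0^c₁ 1 0^c₂ ⋯ 1 0^c₆`. Prefix normality says that the prefix count `ℓ ↦ |w[0, ℓ)|₁` is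
subadditive, which for such words amounts to `c₁ ≤ c₂, c₃, c₄, c₅` and
`c₁ + c₂ ≤ c₃ + c₄, c₄ + c₅`. Splitting by whether `c₂ ≤ c₄`, a linear change of variables makes
the gaps free: the first family corresponds to the solutions of `5a + 2u + v + s + w + t = n - 6`,
the second to those of `5a + 3u + 2s + v + w + t = n - 9`. Hence the generating function is
`x⁶ / ((1 - x⁵)(1 - x²)(1 - x)⁴) + x⁹ / ((1 - x⁵)(1 - x³)(1 - x²)(1 - x)³)`.
-/

open PowerSeries Finset

def weightedSum (L v : List ℕ) : ℕ := (List.zipWith (· * ·) L v).sum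

@[simp] lemma weightedSum_nil_left (v : List ℕ) : weightedSum [] v = 0 := rfl

@[simp] lemma weightedSum_cons_cons (k j : ℕ) (L v : List ℕ) :
    weightedSum (k :: L) (j :: v) = k * j + weightedSum L v := by
  simp [weightedSum]

def solutions : List ℕ → ℕ → Finset (List ℕ)
  | [], r => if r = 0 then {[]} else ∅
  | k :: L, r => (range (r / k + 1)).biUnion fun j => (solutions L (r - k * j)).image (j :: ·)

lemma mem_solutions {L : List ℕ} (hL : ∀ k ∈ L, 0 < k) {v : List ℕ} {r : ℕ} :
    v ∈ solutions L r ↔ v.length = L.length ∧ weightedSum L v = r := by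
  induction L generalizing r v with
  | nil =>
    rw [solutions, List.length_nil, List.length_eq_zero_iff]
    split_ifs with hr <;> aesop
  | cons k L ih =>
    have hk : 0 < k := hL k List.mem_cons_self
    simp only [solutions, mem_biUnion, mem_range, mem_image,
      ih fun x hx => hL x (List.mem_cons_of_mem k hx)]
    constructor
    · rintro ⟨j, hj, u, ⟨hlen, hsum⟩, rfl⟩
      have : k * j ≤ r := by rw [mul_comm]; exact (Nat.le_div_iff_mul_le hk).mp (by omega)
      simp only [List.length_cons, hlen, weightedSum_cons_cons, true_and]
      omega
    · rintro ⟨hlen, hsum⟩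
      obtain _ | ⟨j, u⟩ := v
      · simp at hlen
      · simp only [List.length_cons, add_left_inj, weightedSum_cons_cons] at hlen hsum
        refine ⟨j, ?_, u, ⟨hlen, by omega⟩, rfl⟩
        exact Nat.lt_succ_of_le ((Nat.le_div_iff_mul_le hk).mpr (by rw [mul_comm]; omega))

lemma card_solutions_cons (k : ℕ) (L : List ℕ) (r : ℕ) :
    #(solutions (k :: L) r) = ∑ j ∈ range (r / k + 1), #(solutions L (r - k * j)) := by
  rw [solutions, card_biUnion]
  · exact sum_congr rfl fun j _ => card_image_of_injective _ List.cons_injective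
  · intro i _ j _ hij
    simp only [Function.onFun, disjoint_left, mem_image]
    rintro _ ⟨u, -, rfl⟩ ⟨u', -, h⟩
    exact hij (List.cons.inj h).1.symm

lemma weightedSum_replicate_one (cs : List ℕ) :
    weightedSum (List.replicate cs.length 1) cs = cs.sum := by
  induction cs with
  | nil => rfl
  | cons c cs ih => simp [List.replicate_succ, ih]

lemma mem_solutions_replicate_one {d m : ℕ} {cs : List ℕ} :
    cs ∈ solutions (List.replicate d 1) m ↔ cs.length = d ∧ cs.sum = m := by
  rw [mem_solutions fun k hk => by rw [List.eq_of_mem_replicate hk]; exact one_pos,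
    List.length_replicate]
  refine and_congr_right ?_
  rintro rfl
  rw [weightedSum_replicate_one]

noncomputable def solutionsGenFun (L : List ℕ) : PowerSeries ℤ :=
  PowerSeries.mk fun r => (#(solutions L r) : ℤ)

lemma one_sub_X_pow_mul_solutionsGenFun_cons {k : ℕ} (hk : 0 < k) (L : List ℕ) :
    (1 - X ^ k) * solutionsGenFun (k :: L) = solutionsGenFun L := by
  ext r
  rw [sub_mul, one_mul, map_sub, coeff_X_pow_mul']
  simp only [solutionsGenFun, coeff_mk, card_solutions_cons]
  split_ifs with hkr
  · rw [Nat.div_eq_sub_div hk hkr, sum_range_succ']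
    simp only [mul_zero, Nat.sub_zero, mul_add_one, Nat.sub_sub, add_comm _ k]
    push_cast
    ring
  · rw [Nat.div_eq_of_lt (by omega)]
    simp

lemma solutionsGenFun_nil : solutionsGenFun [] = 1 := by
  ext r
  simp only [solutionsGenFun, coeff_mk, solutions, coeff_one]
  split_ifs <;> simp

lemma prod_one_sub_X_pow_mul_solutionsGenFun {L : List ℕ} (hL : ∀ k ∈ L, 0 < k) :
    (L.map fun k => 1 - X ^ k).prod * solutionsGenFun L = 1 := by
  induction L with
  | nil => simp [solutionsGenFun_nil]
  | cons k L ih =>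
    rw [List.map_cons, List.prod_cons, mul_comm (1 - X ^ k), mul_assoc,
      one_sub_X_pow_mul_solutionsGenFun_cons (hL k List.mem_cons_self),
      ih fun x hx => hL x (List.mem_cons_of_mem k hx)]

def prefixCount (w : List Bool) (ℓ : ℕ) : ℕ := (w.take ℓ).count true

@[simp] lemma prefixCount_nil (x : ℕ) : prefixCount [] x = 0 := by simp [prefixCount]

lemma prefixCount_mono (w : List Bool) {a b : ℕ} (h : a ≤ b) :
    prefixCount w a ≤ prefixCount w b := by
  rw [prefixCount, prefixCount, ← Nat.min_eq_left h, ← List.take_take]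
  exact (List.take_sublist _ _).count_le true

-- The count of `1`s in a factor is a difference of prefix counts.
lemma isPrefixNormal_iff_subadditive (w : List Bool) :
    IsPrefixNormal w ↔ ∀ i ℓ, prefixCount w (i + ℓ) ≤ prefixCount w i + prefixCount w ℓ := by
  constructor
  · intro h i ℓ
    set u := (w.drop i).take ℓ
    have hfactor : u <:+: w :=
      ⟨w.take i, w.drop (i + ℓ), by rw [← List.take_add, List.take_append_drop]⟩
    have hsplit : prefixCount w (i + ℓ) = prefixCount w i + u.count true := by
      rw [prefixCount, List.take_add, List.count_append]; rfl
    have hu : u.count true ≤ prefixCount w u.length := h u hfactor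
    have := prefixCount_mono w (show u.length ≤ ℓ from List.length_take_le _ _)
    omega
  · rintro h u ⟨s, t, rfl⟩
    have := h s.length u.length
    simp only [prefixCount, List.append_assoc, List.take_add, List.take_left, List.drop_left,
      List.count_append] at this ⊢
    omega

def ofGaps : List ℕ → List Bool
  | [] => []
  | c :: cs => true :: (List.replicate c false ++ ofGaps cs)

@[simp] lemma ofGaps_nil : ofGaps [] = [] := rfl

@[simp] lemma length_ofGaps (cs : List ℕ) : (ofGaps cs).length = cs.length + cs.sum := by
  induction cs with
  | nil => rfl
  | cons c cs ih => simp [ofGaps, ih]; omega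

@[simp] lemma count_true_ofGaps (cs : List ℕ) : (ofGaps cs).count true = cs.length := by
  induction cs with
  | nil => rfl
  | cons c cs ih => simp [ofGaps, List.count_replicate, ih]

lemma replicate_false_append_inj {a b : ℕ} {u v : List Bool} (hu : u.head? ≠ some false)
    (hv : v.head? ≠ some false) (h : List.replicate a false ++ u = List.replicate b false ++ v) :
    a = b ∧ u = v := by
  induction a generalizing b with
  | zero =>
    cases b with
    | zero => exact ⟨rfl, h⟩
    | succ b => subst h; simp [List.replicate_succ] at hu
  | succ a ih =>
    cases b with
    | zero => subst h; simp [List.replicate_succ] at hv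
    | succ b => simpa using ih (by simpa [List.replicate_succ] using h)

lemma head?_ofGaps_ne (cs : List ℕ) : (ofGaps cs).head? ≠ some false := by
  cases cs <;> simp [ofGaps]

lemma ofGaps_injective : Function.Injective ofGaps := by
  intro cs cs' h
  induction cs generalizing cs' with
  | nil => cases cs' <;> simp_all [ofGaps]
  | cons c cs ih =>
    cases cs' with
    | nil => simp [ofGaps] at h
    | cons c' cs' =>
      simp only [ofGaps, List.cons.injEq, true_and] at h
      obtain ⟨rfl, htail⟩ := replicate_false_append_inj (head?_ofGaps_ne _) (head?_ofGaps_ne _) h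
      rw [ih htail]

lemma exists_eq_replicate_append_ofGaps (w : List Bool) :
    ∃ z cs, w = List.replicate z false ++ ofGaps cs := by
  induction w with
  | nil => exact ⟨0, [], rfl⟩
  | cons b w ih =>
    obtain ⟨z, cs, rfl⟩ := ih
    cases b with
    | false => exact ⟨z + 1, cs, rfl⟩
    | true => exact ⟨0, z :: cs, rfl⟩

-- The factor `[true]` must be dominated by the prefix of length one.
lemma IsPrefixNormal.exists_eq_ofGaps {w : List Bool} (hw : IsPrefixNormal w)
    (h : true ∈ w) : ∃ cs, w = ofGaps cs := by
  obtain ⟨z, cs, rfl⟩ := exists_eq_replicate_append_ofGaps w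
  obtain _ | z := z
  · exact ⟨cs, rfl⟩
  · have := hw [true] ((List.singleton_infix_iff _ _).mpr h)
    simp [List.replicate_succ] at this

lemma prefixCount_ofGaps_cons (c : ℕ) (cs : List ℕ) (x : ℕ) :
    prefixCount (ofGaps (c :: cs)) x =
      if x = 0 then 0 else prefixCount (ofGaps cs) (x - 1 - c) + 1 := by
  obtain _ | x := x
  · simp [prefixCount]
  · simp [prefixCount, ofGaps, List.take_append, List.count_replicate]

lemma prefixCount_ofGaps_six (c₁ c₂ c₃ c₄ c₅ c₆ x : ℕ) :
    (x = 0 ∧ prefixCount (ofGaps [c₁, c₂, c₃, c₄, c₅, c₆]) x = 0) ∨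
    (1 ≤ x ∧ x < 2 + c₁ ∧ prefixCount (ofGaps [c₁, c₂, c₃, c₄, c₅, c₆]) x = 1) ∨
    (2 + c₁ ≤ x ∧ x < 3 + c₁ + c₂ ∧ prefixCount (ofGaps [c₁, c₂, c₃, c₄, c₅, c₆]) x = 2) ∨
    (3 + c₁ + c₂ ≤ x ∧ x < 4 + c₁ + c₂ + c₃ ∧
      prefixCount (ofGaps [c₁, c₂, c₃, c₄, c₅, c₆]) x = 3) ∨
    (4 + c₁ + c₂ + c₃ ≤ x ∧ x < 5 + c₁ + c₂ + c₃ + c₄ ∧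
      prefixCount (ofGaps [c₁, c₂, c₃, c₄, c₅, c₆]) x = 4) ∨
    (5 + c₁ + c₂ + c₃ + c₄ ≤ x ∧ x < 6 + c₁ + c₂ + c₃ + c₄ + c₅ ∧
      prefixCount (ofGaps [c₁, c₂, c₃, c₄, c₅, c₆]) x = 5) ∨
    (6 + c₁ + c₂ + c₃ + c₄ + c₅ ≤ x ∧ prefixCount (ofGaps [c₁, c₂, c₃, c₄, c₅, c₆]) x = 6) := by
  simp only [prefixCount_ofGaps_cons, ofGaps_nil, prefixCount_nil]
  split_ifs <;> omega

lemma isPrefixNormal_ofGaps_six_iff (c₁ c₂ c₃ c₄ c₅ c₆ : ℕ) :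
    IsPrefixNormal (ofGaps [c₁, c₂, c₃, c₄, c₅, c₆]) ↔
      c₁ ≤ c₂ ∧ c₁ ≤ c₃ ∧ c₁ ≤ c₄ ∧ c₁ ≤ c₅ ∧ c₁ + c₂ ≤ c₃ + c₄ ∧ c₁ + c₂ ≤ c₄ + c₅ := by
  have spec := prefixCount_ofGaps_six c₁ c₂ c₃ c₄ c₅ c₆
  rw [isPrefixNormal_iff_subadditive]
  constructor
  · intro h
    -- Each condition is subadditivity at a window `[i, i + ℓ)` that starts at a `1` and ends
    -- right after a later one, so the prefix of length `ℓ` must hold as many `1`s.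
    have window := fun i ℓ => (⟨h i ℓ, spec (i + ℓ), spec i, spec ℓ⟩ : _ ∧ _ ∧ _ ∧ _)
    refine ⟨?_, ?_, ?_, ?_, ?_, ?_⟩
    · have := window (1 + c₁) (c₂ + 2); omega
    · have := window (2 + c₁ + c₂) (c₃ + 2); omega
    · have := window (3 + c₁ + c₂ + c₃) (c₄ + 2); omega
    · have := window (4 + c₁ + c₂ + c₃ + c₄) (c₅ + 2); omega
    · have := window (2 + c₁ + c₂) (c₃ + c₄ + 3); omega
    · have := window (3 + c₁ + c₂ + c₃) (c₄ + c₅ + 3); omega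
  · intro hc i ℓ
    have := spec (i + ℓ)
    have := spec i
    have := spec ℓ
    omega

open Classical in
noncomputable def prefixNormalGaps (d m : ℕ) : Finset (List ℕ) :=
  {cs ∈ solutions (List.replicate d 1) m | IsPrefixNormal (ofGaps cs)}

lemma pnwd_eq_card_prefixNormalGaps {n d : ℕ} (hd : 0 < d) (hdn : d ≤ n) :
    pnwd n d = #(prefixNormalGaps d (n - d)) := by
  have hwords : {w | w.length = n ∧ w.count true = d ∧ IsPrefixNormal w} =
      ((prefixNormalGaps d (n - d)).image ofGaps : Set (List Bool)) := by
    ext w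
    simp only [Set.mem_ofPred_eq, coe_image, Set.mem_image, mem_coe, prefixNormalGaps, mem_filter,
      mem_solutions_replicate_one]
    constructor
    · rintro ⟨hlen, hcount, hw⟩
      obtain ⟨cs, rfl⟩ := hw.exists_eq_ofGaps (List.count_pos_iff.mp (hcount ▸ hd))
      simp only [length_ofGaps, count_true_ofGaps] at hlen hcount
      exact ⟨cs, ⟨⟨hcount, by omega⟩, hw⟩, rfl⟩
    · rintro ⟨cs, ⟨⟨hlen, hsum⟩, hw⟩, rfl⟩
      simp only [length_ofGaps, count_true_ofGaps]
      exact ⟨by omega, hlen, hw⟩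
  rw [pnwd, ← Set.coe_ofPred, hwords, Nat.card_coe_set_eq, Set.ncard_coe_finset,
    card_image_of_injective _ ofGaps_injective]

lemma pnwd_eq_zero_of_lt {n d : ℕ} (h : n < d) : pnwd n d = 0 := by
  rw [pnwd, Nat.card_eq_zero]
  left
  constructor
  rintro ⟨w, hlen, hcount, -⟩
  have := w.count_le_length (a := true)
  omega

lemma exists_eq_of_length_eq_six {α : Type*} {l : List α} (h : l.length = 6) :
    ∃ a₁ a₂ a₃ a₄ a₅ a₆, l = [a₁, a₂, a₃, a₄, a₅, a₆] := by
  match l, h with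
  | [a₁, a₂, a₃, a₄, a₅, a₆], _ => exact ⟨a₁, a₂, a₃, a₄, a₅, a₆, rfl⟩

lemma mem_prefixNormalGaps_six {m : ℕ} {cs : List ℕ} :
    cs ∈ prefixNormalGaps 6 m ↔ ∃ c₁ c₂ c₃ c₄ c₅ c₆, cs = [c₁, c₂, c₃, c₄, c₅, c₆] ∧
      c₁ + c₂ + c₃ + c₄ + c₅ + c₆ = m ∧ c₁ ≤ c₂ ∧ c₁ ≤ c₃ ∧ c₁ ≤ c₄ ∧ c₁ ≤ c₅ ∧
      c₁ + c₂ ≤ c₃ + c₄ ∧ c₁ + c₂ ≤ c₄ + c₅ := by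
  simp only [prefixNormalGaps, mem_filter, mem_solutions_replicate_one]
  constructor
  · rintro ⟨⟨hlen, hsum⟩, hw⟩
    obtain ⟨c₁, c₂, c₃, c₄, c₅, c₆, rfl⟩ := exists_eq_of_length_eq_six hlen
    refine ⟨c₁, c₂, c₃, c₄, c₅, c₆, rfl, ?_, (isPrefixNormal_ofGaps_six_iff ..).mp hw⟩
    simpa [add_assoc] using hsum
  · rintro ⟨c₁, c₂, c₃, c₄, c₅, c₆, rfl, hsum, hc⟩
    exact ⟨⟨rfl, by simpa [add_assoc] using hsum⟩, (isPrefixNormal_ofGaps_six_iff ..).mpr hc⟩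

lemma card_prefixNormalGaps_six_filter_le (m : ℕ) :
    #{cs ∈ prefixNormalGaps 6 m | cs.getD 1 0 ≤ cs.getD 3 0} =
      #(solutions [5, 2, 1, 1, 1, 1] m) := by
  have hpos : ∀ k ∈ [5, 2, 1, 1, 1, 1], 0 < k := by decide
  -- When `c₂ ≤ c₄`, the conditions `c₁ + c₂ ≤ c₃ + c₄, c₄ + c₅` follow from the others.
  apply card_nbij'
    (fun | [c₁, c₂, c₃, c₄, c₅, c₆] => [c₁, c₂ - c₁, c₃ - c₁, c₄ - c₂, c₅ - c₁, c₆] | _ => [])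
    (fun | [a, u, v, s, w, t] => [a, a + u, a + v, a + u + s, a + w, t] | _ => [])
  · rintro cs hcs
    simp only [coe_filter, Set.mem_ofPred_eq, mem_prefixNormalGaps_six] at hcs
    obtain ⟨⟨c₁, c₂, c₃, c₄, c₅, c₆, rfl, hsum, hc⟩, hle⟩ := hcs
    simp only [List.getD_cons_succ, List.getD_cons_zero] at hle
    simp only [mem_coe, mem_solutions hpos, List.length_cons, List.length_nil,
      weightedSum_cons_cons, weightedSum_nil_left, true_and]
    omega
  · rintro v hv
    obtain ⟨hlen, hsum⟩ := (mem_solutions hpos).mp hv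
    obtain ⟨a, u, v, s, w, t, rfl⟩ := exists_eq_of_length_eq_six hlen
    simp only [weightedSum_cons_cons, weightedSum_nil_left] at hsum
    simp only [coe_filter, Set.mem_ofPred_eq, mem_prefixNormalGaps_six, List.getD_cons_succ,
      List.getD_cons_zero]
    exact ⟨⟨_, _, _, _, _, _, rfl, by omega, by omega⟩, by omega⟩
  · rintro cs hcs
    simp only [coe_filter, Set.mem_ofPred_eq, mem_prefixNormalGaps_six] at hcs
    obtain ⟨⟨c₁, c₂, c₃, c₄, c₅, c₆, rfl, hsum, hc⟩, hle⟩ := hcs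
    simp only [List.getD_cons_succ, List.getD_cons_zero] at hle
    simp only [List.cons.injEq, and_true, true_and]
    omega
  · rintro v hv
    obtain ⟨hlen, hsum⟩ := (mem_solutions hpos).mp hv
    obtain ⟨a, u, v, s, w, t, rfl⟩ := exists_eq_of_length_eq_six hlen
    simp only [List.cons.injEq, and_true, true_and]
    omega

lemma card_prefixNormalGaps_six_filter_not_le {m : ℕ} (hm : 3 ≤ m) :
    #{cs ∈ prefixNormalGaps 6 m | ¬cs.getD 1 0 ≤ cs.getD 3 0} =
      #(solutions [5, 3, 2, 1, 1, 1] (m - 3)) := by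
  have hpos : ∀ k ∈ [5, 3, 2, 1, 1, 1], 0 < k := by decide
  -- Writing `c₂ = c₄ + 1 + u`, the conditions force `c₃, c₅ ≥ c₁ + 1 + u`: hence the shift by 3.
  apply card_nbij'
    (fun | [c₁, c₂, c₃, c₄, c₅, c₆] =>
            [c₁, c₂ - c₄ - 1, c₄ - c₁, c₃ - c₁ - (c₂ - c₄), c₅ - c₁ - (c₂ - c₄), c₆]
         | _ => [])
    (fun | [a, u, s, v, w, t] => [a, a + s + 1 + u, a + 1 + u + v, a + s, a + 1 + u + w, t]
         | _ => [])
  · rintro cs hcs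
    simp only [coe_filter, Set.mem_ofPred_eq, mem_prefixNormalGaps_six] at hcs
    obtain ⟨⟨c₁, c₂, c₃, c₄, c₅, c₆, rfl, hsum, hc⟩, hlt⟩ := hcs
    simp only [List.getD_cons_succ, List.getD_cons_zero] at hlt
    simp only [mem_coe, mem_solutions hpos, List.length_cons, List.length_nil,
      weightedSum_cons_cons, weightedSum_nil_left, true_and]
    omega
  · rintro v hv
    obtain ⟨hlen, hsum⟩ := (mem_solutions hpos).mp hv
    obtain ⟨a, u, s, v, w, t, rfl⟩ := exists_eq_of_length_eq_six hlen
    simp only [weightedSum_cons_cons, weightedSum_nil_left] at hsum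
    simp only [coe_filter, Set.mem_ofPred_eq, mem_prefixNormalGaps_six, List.getD_cons_succ,
      List.getD_cons_zero]
    exact ⟨⟨_, _, _, _, _, _, rfl, by omega, by omega⟩, by omega⟩
  · rintro cs hcs
    simp only [coe_filter, Set.mem_ofPred_eq, mem_prefixNormalGaps_six] at hcs
    obtain ⟨⟨c₁, c₂, c₃, c₄, c₅, c₆, rfl, hsum, hc⟩, hlt⟩ := hcs
    simp only [List.getD_cons_succ, List.getD_cons_zero] at hlt
    simp only [List.cons.injEq, and_true, true_and]
    omega
  · rintro v hv
    obtain ⟨hlen, hsum⟩ := (mem_solutions hpos).mp hv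
    obtain ⟨a, u, s, v, w, t, rfl⟩ := exists_eq_of_length_eq_six hlen
    simp only [List.cons.injEq, and_true, true_and]
    omega

lemma filter_not_le_prefixNormalGaps_six_eq_empty {m : ℕ} (hm : m < 3) :
    {cs ∈ prefixNormalGaps 6 m | ¬cs.getD 1 0 ≤ cs.getD 3 0} = ∅ := by
  refine filter_eq_empty_iff.mpr fun cs hcs => ?_
  obtain ⟨c₁, c₂, c₃, c₄, c₅, c₆, rfl, hsum, hc⟩ := mem_prefixNormalGaps_six.mp hcs
  simp only [List.getD_cons_succ, List.getD_cons_zero]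
  omega

lemma genFun_prefixNormalGaps_six :
    PowerSeries.mk (fun m => (#(prefixNormalGaps 6 m) : ℤ)) =
      solutionsGenFun [5, 2, 1, 1, 1, 1] + X ^ 3 * solutionsGenFun [5, 3, 2, 1, 1, 1] := by
  ext m
  rw [map_add, coeff_X_pow_mul', coeff_mk, solutionsGenFun, solutionsGenFun, coeff_mk,
    ← card_filter_add_card_filter_not (fun cs => cs.getD 1 0 ≤ cs.getD 3 0),
    card_prefixNormalGaps_six_filter_le]
  split_ifs with hm
  · rw [card_prefixNormalGaps_six_filter_not_le hm, coeff_mk, Nat.cast_add]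
  · rw [filter_not_le_prefixNormalGaps_six_eq_empty (by omega), card_empty, Nat.cast_add,
      Nat.cast_zero, add_zero]

lemma mk_pnwd_six :
    PowerSeries.mk (fun n => if n = 0 then 0 else (pnwd n 6 : ℤ)) =
      X ^ 6 * PowerSeries.mk (fun m => (#(prefixNormalGaps 6 m) : ℤ)) := by
  ext n
  rw [coeff_X_pow_mul', coeff_mk, coeff_mk]
  split_ifs with h₀ h₆ h₆
  · omega
  · rfl
  · rw [pnwd_eq_card_prefixNormalGaps (by norm_num) h₆]
  · rw [pnwd_eq_zero_of_lt (by omega), Nat.cast_zero]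

open PowerSeries in
theorem genFun_density_six :
    (1 - (X : PowerSeries ℤ) ^ 5) * (1 - X ^ 3) * (1 - X ^ 2) * (1 - X) ^ 3 *
      PowerSeries.mk (fun n => if n = 0 then 0 else (pnwd n 6 : ℤ)) =
      X ^ 6 * (1 + X + X ^ 2 + X ^ 3) := by
  have hA := prod_one_sub_X_pow_mul_solutionsGenFun (L := [5, 2, 1, 1, 1, 1]) (by decide)
  have hB := prod_one_sub_X_pow_mul_solutionsGenFun (L := [5, 3, 2, 1, 1, 1]) (by decide)
  simp only [List.map_cons, List.map_nil, List.prod_cons, List.prod_nil, pow_one] at hA hB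
  rw [mk_pnwd_six, genFun_prefixNormalGaps_six]
  linear_combination (X ^ 6 * (1 + X + X ^ 2)) * hA + X ^ 9 * hB
end

section
/- Let v and w be prefix normal binary words that both begin with the symbol 1. If v ≠ w, then the extension languages L_ext(v) and L_ext(w) are different, i.e., there exists a binary word w' that belongs to exactly one of L_ext(v) and L_ext(w). -/
/-
Let `prefixOnes x l` count the ones among the first `l` letters of `x`. Padding a prefix normal
word `x` by at least `|x|` zeros and then appending a prefix normal `u` with
`prefixOnes u ≤ prefixOnes x` keeps it prefix normal: a window reaching into `u` either misses `x`,
or covers the zeros and a suffix of `x`, and subadditivity of `prefixOnes u` absorbs the rest.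

If `L_ext(v) = L_ext(w)`, then `0^|v| v ∈ L_ext(w)`, and the window `v` at the end of `w 0^|v| v`
gives `prefixOnes v ≤ prefixOnes w`; by symmetry the prefix counts agree, so for `|v| ≤ |w|` we
get `w = v 0^d`. If `d > 0`, `L_ext(v)` is closed under prepending `0^d`. Now
`z = 0^n v 0^(3n) v ∈ L_ext(v)` carries twice the ones of `v`, at least one more, but in
`v 0^(kd) z` with `kd ≥ |z|` the window `z` is compared with a prefix that sees only the ones of `v`.
-/

open List

def prefixOnes (x : List Bool) (l : ℕ) : ℕ := (x.take l).count true

/-- The extension language `L_ext(v)`. -/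
def extLang (v : List Bool) : Set (List Bool) := {w' | IsPrefixNormal (v ++ w')}

theorem mem_extLang {v z : List Bool} : z ∈ extLang v ↔ IsPrefixNormal (v ++ z) := Iff.rfl

section prefixOnes

variable {x y : List Bool}

@[simp]
theorem prefixOnes_zero (x : List Bool) : prefixOnes x 0 = 0 := rfl

theorem prefixOnes_mono (x : List Bool) {a b : ℕ} (h : a ≤ b) :
    prefixOnes x a ≤ prefixOnes x b := by
  unfold prefixOnes
  rw [← min_eq_left h, ← take_take]
  exact ((x.take b).take_sublist a).count_le _

theorem prefixOnes_le_count (x : List Bool) (l : ℕ) : prefixOnes x l ≤ x.count true :=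
  (x.take_sublist l).count_le _

theorem prefixOnes_of_length_le {l : ℕ} (h : x.length ≤ l) : prefixOnes x l = x.count true := by
  rw [prefixOnes, take_of_length_le h]

theorem prefixOnes_add (x : List Bool) (a b : ℕ) :
    prefixOnes x (a + b) = prefixOnes x a + prefixOnes (x.drop a) b := by
  rw [prefixOnes, take_add, count_append]; rfl

theorem prefixOnes_append (x y : List Bool) (l : ℕ) :
    prefixOnes (x ++ y) l = prefixOnes x l + prefixOnes y (l - x.length) := by
  rw [prefixOnes, take_append, count_append]; rfl

theorem prefixOnes_replicate_false (N l : ℕ) : prefixOnes (replicate N false) l = 0 := by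
  simp [prefixOnes, take_replicate, count_replicate]

theorem prefixOnes_append_replicate_false (x : List Bool) (N l : ℕ) :
    prefixOnes (x ++ replicate N false) l = prefixOnes x l := by
  rw [prefixOnes_append, prefixOnes_replicate_false, add_zero]

theorem prefixOnes_add_one {k : ℕ} (hk : k < x.length) :
    prefixOnes x (k + 1) = prefixOnes x k + x[k].toNat := by
  rw [prefixOnes_add, drop_eq_getElem_cons hk]
  cases x[k] <;> rfl

theorem eq_of_prefixOnes_eq (hlen : x.length = y.length)
    (h : ∀ j ≤ x.length, prefixOnes x j = prefixOnes y j) : x = y := by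
  refine ext_getElem hlen fun k hkx hky => ?_
  have hx := prefixOnes_add_one hkx
  rw [h k (by omega), h (k + 1) hkx, prefixOnes_add_one hky] at hx
  have hk : x[k].toNat = y[k].toNat := by omega
  revert hk
  cases x[k] <;> cases y[k] <;> simp

end prefixOnes

namespace IsPrefixNormal

variable {x y u : List Bool}

theorem prefixOnes_le_of_infix (hy : IsPrefixNormal y) (hu : u <:+: y) (l : ℕ) :
    prefixOnes u l ≤ prefixOnes y l :=
  calc prefixOnes u l ≤ prefixOnes y (u.take l).length :=
        hy _ (((u.take_prefix l).isInfix).trans hu)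
    _ ≤ prefixOnes y l := prefixOnes_mono y (length_take_le l u)

theorem prefixOnes_drop_le (hx : IsPrefixNormal x) (i l : ℕ) :
    prefixOnes (x.drop i) l ≤ prefixOnes x l :=
  hx.prefixOnes_le_of_infix (x.drop_suffix i).isInfix l

theorem prefixOnes_add_le (hx : IsPrefixNormal x) (a b : ℕ) :
    prefixOnes x (a + b) ≤ prefixOnes x a + prefixOnes x b := by
  rw [prefixOnes_add]
  exact Nat.add_le_add_left (hx.prefixOnes_drop_le a b) _

end IsPrefixNormal

theorem isPrefixNormal_iff_prefixOnes_drop_le {x : List Bool} :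
    IsPrefixNormal x ↔ ∀ i l, prefixOnes (x.drop i) l ≤ prefixOnes x l := by
  refine ⟨IsPrefixNormal.prefixOnes_drop_le, fun h u ⟨s, t, hst⟩ => ?_⟩
  have hu : (x.drop s.length).take u.length = u := by
    rw [← hst, append_assoc, drop_left, take_left]
  simpa [prefixOnes, hu] using h s.length u.length

section extLang

variable {x u v w : List Bool}

theorem replicate_append_mem_extLang (hx : IsPrefixNormal x) (hu : IsPrefixNormal u)
    (hux : ∀ l, prefixOnes u l ≤ prefixOnes x l) {N : ℕ} (hN : x.length ≤ N) :
    replicate N false ++ u ∈ extLang x := by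
  rw [mem_extLang, isPrefixNormal_iff_prefixOnes_drop_le]
  intro i l
  have hprefix : prefixOnes (x ++ (replicate N false ++ u)) l
      = prefixOnes x l + prefixOnes u (l - x.length - N) := by
    rw [prefixOnes_append, prefixOnes_append, prefixOnes_replicate_false, length_replicate,
      zero_add]
  rw [hprefix, drop_append, drop_append, prefixOnes_append, prefixOnes_append, drop_replicate,
    prefixOnes_replicate_false, zero_add, length_drop, length_replicate]
  rcases le_or_gt x.length i with hi | hi
  · calc _ = prefixOnes (u.drop (i - x.length - N)) (l - (x.length - i) - (N - (i - x.length)))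
          := by simp [drop_eq_nil_of_le hi, prefixOnes]
      _ ≤ prefixOnes u l := (hu.prefixOnes_drop_le _ _).trans (prefixOnes_mono u (by omega))
      _ ≤ _ := (hux l).trans (Nat.le_add_right _ _)
  rw [show i - x.length = 0 by omega, Nat.zero_sub, drop_zero, Nat.sub_zero, length_replicate]
  rcases le_or_gt l (x.length - i + N) with hl | hl
  · rw [show l - (x.length - i) - N = 0 by omega, prefixOnes_zero, add_zero]
    exact (hx.prefixOnes_drop_le i l).trans (Nat.le_add_right _ _)
  have hcount : prefixOnes x i + prefixOnes (x.drop i) l = prefixOnes x l := by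
    have hdrop : prefixOnes (x.drop i) l = prefixOnes (x.drop i) (x.length - i) := by
      rw [prefixOnes_of_length_le (by simp; omega), prefixOnes_of_length_le (by simp)]
    rw [hdrop, ← prefixOnes_add, prefixOnes_of_length_le (by omega),
      prefixOnes_of_length_le (by omega)]
  have hu_split : prefixOnes u (l - (x.length - i) - N)
      ≤ prefixOnes x i + prefixOnes u (l - x.length - N) :=
    calc _ ≤ prefixOnes u (i + (l - x.length - N)) := prefixOnes_mono u (by omega)
      _ ≤ prefixOnes u i + prefixOnes u (l - x.length - N) := hu.prefixOnes_add_le _ _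
      _ ≤ _ := Nat.add_le_add_right (hux i) _
  omega

theorem replicate_append_self_mem_extLang (hx : IsPrefixNormal x) {N : ℕ} (hN : x.length ≤ N) :
    replicate N false ++ x ∈ extLang x :=
  replicate_append_mem_extLang hx hx (fun _ => le_rfl) hN

theorem prefixOnes_le_of_replicate_append_mem_extLang {N : ℕ}
    (h : replicate N false ++ u ∈ extLang x) {j : ℕ} (hj : j ≤ x.length + N) :
    prefixOnes u j ≤ prefixOnes x j :=
  calc prefixOnes u j ≤ prefixOnes (x ++ (replicate N false ++ u)) j :=
        (mem_extLang.mp h).prefixOnes_le_of_infix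
          ((suffix_append _ u).trans (suffix_append x _)).isInfix j
    _ = prefixOnes x j := by
        rw [prefixOnes_append, prefixOnes_append, prefixOnes_replicate_false, length_replicate,
          show j - x.length - N = 0 by omega]
        simp

theorem prefixOnes_le_of_extLang_subset (hv : IsPrefixNormal v) (h : extLang v ⊆ extLang w)
    {j : ℕ} (hj : j ≤ w.length + v.length) : prefixOnes v j ≤ prefixOnes w j :=
  prefixOnes_le_of_replicate_append_mem_extLang
    (h (replicate_append_self_mem_extLang hv le_rfl)) hj

theorem eq_append_replicate_false_of_extLang_eq (hv : IsPrefixNormal v) (hw : IsPrefixNormal w)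
    (h : extLang v = extLang w) (hle : v.length ≤ w.length) :
    w = v ++ replicate (w.length - v.length) false := by
  refine (eq_of_prefixOnes_eq (by simp; omega) fun j hj => ?_).symm
  rw [length_append, length_replicate] at hj
  rw [prefixOnes_append_replicate_false]
  exact le_antisymm (prefixOnes_le_of_extLang_subset hv h.le (by omega))
    (prefixOnes_le_of_extLang_subset hw h.ge (by omega))

theorem replicate_mul_append_mem_extLang {d : ℕ}
    (h : extLang (v ++ replicate d false) = extLang v) {z : List Bool} (hz : z ∈ extLang v) :
    ∀ k, replicate (k * d) false ++ z ∈ extLang v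
  | 0 => by simpa using hz
  | k + 1 => by
    have hsplit : replicate ((k + 1) * d) false ++ z
        = replicate d false ++ (replicate (k * d) false ++ z) := by
      rw [add_one_mul, add_comm, replicate_add, append_assoc]
    rw [hsplit, mem_extLang, ← append_assoc, ← mem_extLang, h]
    exact replicate_mul_append_mem_extLang h hz k

theorem extLang_append_replicate_false_ne (hv : IsPrefixNormal v) (hv1 : true ∈ v) {d : ℕ}
    (hd : 0 < d) : extLang (v ++ replicate d false) ≠ extLang v := by
  intro h
  set n := v.length
  set z := replicate n false ++ (v ++ (replicate (3 * n) false ++ v))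
  have hz : z ∈ extLang v := by
    have hx := replicate_append_self_mem_extLang hv le_rfl
    have hvx (l : ℕ) : prefixOnes v l ≤ prefixOnes (v ++ (replicate n false ++ v)) l := by
      simp [prefixOnes_append]
    simpa [z, mem_extLang] using
      replicate_append_mem_extLang hx hv hvx (N := 3 * n) (by simp; omega)
  have hzv := prefixOnes_le_of_replicate_append_mem_extLang
    (replicate_mul_append_mem_extLang h hz z.length) (j := z.length) (by nlinarith)
  have hcount : z.count true = 2 * v.count true := by simp [z, count_replicate]; ring
  rw [prefixOnes_of_length_le le_rfl, hcount] at hzv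
  have hv_le := prefixOnes_le_count v z.length
  have hv_pos := count_pos_iff.mpr hv1
  omega

end extLang

theorem extension_languages_differ (v w : List Bool)
    (hv : IsPrefixNormal v) (hw : IsPrefixNormal w)
    (hv1 : v.head? = some true) (hw1 : w.head? = some true)
    (hne : v ≠ w) :
    {w' : List Bool | IsPrefixNormal (v ++ w')} ≠
    {w' : List Bool | IsPrefixNormal (w ++ w')} := by
  change extLang v ≠ extLang w
  wlog hle : v.length ≤ w.length generalizing v w
  · exact (this w v hw hv hw1 hv1 hne.symm (by omega)).symm
  intro h
  have hwv := eq_append_replicate_false_of_extLang_eq hv hw h hle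
  have hd : 0 < w.length - v.length := by
    by_contra! hd
    exact hne (by simpa [Nat.le_zero.mp hd] using hwv.symm)
  exact extLang_append_replicate_false_ne hv (mem_of_mem_head? hv1) hd (hwv ▸ h.symm)
end

section
/- For all n ≥ 1 and all d with 1 ≤ d ≤ n, the number of binary words w' of length n + d − 3 such that the concatenation 10·w' is prefix normal and has density d equals pnw(n,d), the number of prefix normal words of length n and density d. -/
/-!
Expanding every `1` of a word into `10` preserves and reflects prefix normality. A factor with
`k ≥ 1` ones and length `ℓ` expands, after dropping its final `0`, to a factor with `k` ones and
length `ℓ + k - 1`; conversely a factor of the expansion with `k` ones and length `m` comes from a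
factor of the word with `k` ones and length at most `m + 1 - k`, and the same holds for prefixes.
A prefix normal word of length `n ≥ 2` and density `d ≥ 1` starts with `1`, so its expansion is
`10 w' 0` with `10 w'` prefix normal of density `d` and `|w'| = n + d - 3`. Conversely, when
`10 w'` is prefix normal it has no factor `11`, so `10 w' 0` is an expansion.
-/

def expand : List Bool → List Bool
  | [] => []
  | true :: t => true :: false :: expand t
  | false :: t => false :: expand t

@[simp]
theorem expand_append (a b : List Bool) : expand (a ++ b) = expand a ++ expand b := by
  induction a with
  | nil => rfl
  | cons x a ih => cases x <;> simp [expand, ih]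

@[simp]
theorem count_true_expand (v : List Bool) : (expand v).count true = v.count true := by
  induction v with
  | nil => rfl
  | cons x v ih => cases x <;> simp [expand, ih]

@[simp]
theorem length_expand (v : List Bool) : (expand v).length = v.length + v.count true := by
  induction v with
  | nil => rfl
  | cons x v ih => cases x <;> simp [expand, ih] <;> omega

theorem expand_injective : Function.Injective expand := by
  intro a b h
  induction a generalizing b with
  | nil => cases b with
    | nil => rfl
    | cons y b => cases y <;> simp [expand] at h
  | cons x a ih => cases b with
    | nil => cases x <;> simp [expand] at h
    | cons y b => cases x <;> cases y <;> simp [expand] at h ⊢ <;> exact ih h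

theorem expand_prefix_expand {a v : List Bool} (h : a <+: v) : expand a <+: expand v := by
  obtain ⟨c, rfl⟩ := h
  exact ⟨expand c, (expand_append a c).symm⟩

theorem expand_eq_append_false {v : List Bool} (hv : v ≠ []) :
    ∃ z, expand v = z ++ [false] := by
  rw [← List.dropLast_append_getLast hv, expand_append]
  cases v.getLast hv
  exacts [⟨expand v.dropLast, rfl⟩, ⟨expand v.dropLast ++ [true], by simp [expand]⟩]

theorem exists_expand_eq_append_false :
    ∀ {x : List Bool}, ¬ [true, true] <:+: x → ∃ v, expand v = x ++ [false]
  | [], _ => ⟨[false], rfl⟩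
  | [true], _ => ⟨[true], rfl⟩
  | false :: x, h =>
    have ⟨v, hv⟩ := exists_expand_eq_append_false fun h' => h (List.infix_cons h')
    ⟨false :: v, by simp [expand, hv]⟩
  | true :: false :: x, h =>
    have ⟨v, hv⟩ :=
      exists_expand_eq_append_false fun h' => h (List.infix_cons (List.infix_cons h'))
    ⟨true :: v, by simp [expand, hv]⟩
  | true :: true :: x, h => absurd ⟨[], x, rfl⟩ h

theorem append_eq_expand : ∀ {s r v : List Bool}, s ++ r = expand v →
    (∃ a b, v = a ++ b ∧ s = expand a ∧ r = expand b) ∨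
      ∃ a b, v = a ++ true :: b ∧ s = expand a ++ [true] ∧ r = false :: expand b
  | [], _, v, h => Or.inl ⟨[], v, rfl, rfl, h⟩
  | _ :: _, _, [], h => by simp [expand] at h
  | _ :: s, r, false :: v, h => by
    simp only [expand, List.cons_append, List.cons.injEq] at h
    obtain ⟨rfl, h⟩ := h
    rcases append_eq_expand h with ⟨a, b, rfl, rfl, rfl⟩ | ⟨a, b, rfl, rfl, rfl⟩
    · exact Or.inl ⟨false :: a, b, rfl, rfl, rfl⟩
    · exact Or.inr ⟨false :: a, b, rfl, rfl, rfl⟩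
  | [_], r, true :: v, h => by
    simp only [expand, List.cons_append, List.nil_append, List.cons.injEq] at h
    obtain ⟨rfl, rfl⟩ := h
    exact Or.inr ⟨[], v, rfl, rfl, rfl⟩
  | _ :: _ :: s, r, true :: v, h => by
    simp only [expand, List.cons_append, List.cons.injEq] at h
    obtain ⟨rfl, rfl, h⟩ := h
    rcases append_eq_expand h with ⟨a, b, rfl, rfl, rfl⟩ | ⟨a, b, rfl, rfl, rfl⟩
    · exact Or.inl ⟨true :: a, b, rfl, rfl, rfl⟩
    · exact Or.inr ⟨true :: a, b, rfl, rfl, rfl⟩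

theorem exists_prefix_of_prefix_expand {p v : List Bool} (h : p <+: expand v) :
    ∃ a, a <+: v ∧ a.count true = p.count true ∧
      a.length + p.count true ≤ p.length + 1 := by
  obtain ⟨r, h⟩ := h
  rcases append_eq_expand h with ⟨a, b, rfl, rfl, -⟩ | ⟨a, b, rfl, rfl, -⟩
  · exact ⟨a, List.prefix_append a b, by simp, by simp⟩
  · exact ⟨a ++ [true], ⟨b, by simp⟩, by simp, by simp; omega⟩

theorem exists_infix_of_infix_expand {W v : List Bool} (h : W <:+: expand v) :
    ∃ u, u <:+: v ∧ u.count true = W.count true ∧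
      u.length + W.count true ≤ W.length + 1 := by
  obtain ⟨s, t, h⟩ := h
  rw [List.append_assoc] at h
  rcases append_eq_expand h with ⟨a, b, rfl, -, hr⟩ | ⟨a, b, rfl, -, hr⟩
  · obtain ⟨u, ⟨c, rfl⟩, hc, hl⟩ := exists_prefix_of_prefix_expand ⟨t, hr⟩
    exact ⟨u, ⟨a, c, by simp⟩, hc, hl⟩
  · cases W with
    | nil => exact ⟨[], List.nil_infix, rfl, by simp⟩
    | cons x W =>
      simp only [List.cons_append, List.cons.injEq] at hr
      obtain ⟨rfl, hr⟩ := hr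
      obtain ⟨u, ⟨c, rfl⟩, hc, hl⟩ := exists_prefix_of_prefix_expand ⟨t, hr⟩
      exact ⟨u, ⟨a ++ [true], c, by simp⟩, by simpa using hc, by simp; omega⟩

theorem List.exists_prefix_count_eq {α : Type*} [BEq α] [LawfulBEq α] {l : List α} {a : α}
    {k : ℕ} (h : k ≤ l.count a) : ∃ p, p <+: l ∧ p.count a = k := by
  induction l generalizing k with
  | nil => exact ⟨[], List.nil_prefix, (Nat.le_zero.1 h).symm⟩
  | cons x l ih =>
    rcases k with _ | k
    · exact ⟨[], List.nil_prefix, rfl⟩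
    by_cases hx : x = a
    · subst hx
      obtain ⟨p, hp, hc⟩ := ih (k := k) (by simpa using h)
      exact ⟨x :: p, (List.prefix_cons_inj x).2 hp, by simp [hc]⟩
    · obtain ⟨p, hp, hc⟩ := ih (k := k + 1) (by simpa [List.count_cons, hx] using h)
      exact ⟨x :: p, (List.prefix_cons_inj x).2 hp, by simp [hx, hc]⟩

theorem List.IsPrefix.count_le_count_take {α : Type*} [BEq α] {p l : List α} (h : p <+: l)
    {m : ℕ} (hm : p.length ≤ m) (a : α) : p.count a ≤ (l.take m).count a :=
  (List.prefix_take_iff.2 ⟨h, hm⟩).sublist.count_le a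

theorem isPrefixNormal_expand {v : List Bool} (hv : IsPrefixNormal v) :
    IsPrefixNormal (expand v) := by
  intro W hW
  obtain ⟨u, hu, hcount, hlen⟩ := exists_infix_of_infix_expand hW
  -- The shortest prefix `a` of `v` with as many ones as `W` expands, up to its final `0`,
  -- to a prefix of `expand v` that is no longer than `W`.
  obtain ⟨a, ha, hac⟩ := List.exists_prefix_count_eq (hcount ▸ hv u hu)
  rw [List.prefix_take_iff] at ha
  rcases eq_or_ne a [] with rfl | ha0
  · simp [← hac]
  obtain ⟨z, hz⟩ := expand_eq_append_false ha0
  have hz_count : z.count true = a.count true := by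
    simpa using (congrArg (List.count true) hz).symm
  have hz_len : z.length + 1 = a.length + a.count true := by
    simpa using (congrArg List.length hz).symm
  have hz_prefix : z <+: expand v :=
    List.IsPrefix.trans ⟨[false], hz.symm⟩ (expand_prefix_expand ha.1)
  calc W.count true = z.count true := by rw [hz_count, hac]
    _ ≤ ((expand v).take W.length).count true :=
      hz_prefix.count_le_count_take (by omega) true

theorem isPrefixNormal_of_expand {v : List Bool} (hv : IsPrefixNormal (expand v)) :
    IsPrefixNormal v := by
  intro u hu
  rcases eq_or_ne u [] with rfl | hu0
  · simp
  obtain ⟨z, hz⟩ := expand_eq_append_false hu0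
  have hz_count : z.count true = u.count true := by
    simpa using (congrArg (List.count true) hz).symm
  have hz_len : z.length + 1 = u.length + u.count true := by
    simpa using (congrArg List.length hz).symm
  have hz_infix : z <:+: expand v := by
    obtain ⟨s, t, rfl⟩ := hu
    exact ⟨expand s, false :: expand t, by simp [hz]⟩
  have hz_le := hv z hz_infix
  obtain ⟨a, ha, hac, hal⟩ :=
    exists_prefix_of_prefix_expand (List.take_prefix z.length (expand v))
  calc u.count true = z.count true := hz_count.symm
    _ ≤ ((expand v).take z.length).count true := hz_le
    _ = a.count true := hac.symm
    _ ≤ (v.take u.length).count true := ha.count_le_count_take (by simp at hal; omega) true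

theorem isPrefixNormal_expand_iff {v : List Bool} :
    IsPrefixNormal (expand v) ↔ IsPrefixNormal v :=
  ⟨isPrefixNormal_of_expand, isPrefixNormal_expand⟩

theorem isPrefixNormal_append_false_iff {x : List Bool} :
    IsPrefixNormal (x ++ [false]) ↔ IsPrefixNormal x := by
  have take_count : ∀ m, ((x ++ [false]).take m).count true = (x.take m).count true := by
    intro m
    have : ([false].take (m - x.length)).count true = 0 :=
      Nat.le_zero.1 (by simpa using (List.take_sublist _ [false]).count_le true)
    simp [List.take_append, this]
  simp only [IsPrefixNormal, take_count, List.infix_concat_iff, List.suffix_concat_iff]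
  refine ⟨fun h u hu => h u (Or.inr hu), ?_⟩
  rintro h u ((rfl | ⟨t, rfl, ht⟩) | hu)
  · simp
  · calc (t ++ [false]).count true = t.count true := by simp
      _ ≤ (x.take t.length).count true := h t ht.isInfix
      _ ≤ (x.take (t ++ [false]).length).count true :=
        (List.take_prefix_take_left (by simp)).sublist.count_le _
  · exact h u hu

theorem isPrefixNormal_true : IsPrefixNormal [true] := by
  intro u hu
  rcases List.sublist_singleton.1 hu.sublist with rfl | rfl <;> simp

theorem IsPrefixNormal.exists_eq_true_cons {w : List Bool} (hw : IsPrefixNormal w)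
    (h : true ∈ w) : ∃ t, w = true :: t := by
  have h1 := hw [true] ((List.singleton_infix_iff _ _).2 h)
  match w, h1 with
  | true :: t, _ => exact ⟨t, rfl⟩
  | false :: _, h1 => simp at h1

theorem IsPrefixNormal.not_infix_true_true {z : List Bool}
    (h : IsPrefixNormal ([true, false] ++ z)) : ¬ [true, true] <:+: [true, false] ++ z :=
  fun h11 => by simpa using h _ h11

def prefixNormalWords (n d : ℕ) : Set (List Bool) :=
  {w | w.length = n ∧ w.count true = d ∧ IsPrefixNormal w}

def tenExtensions (n d : ℕ) : Set (List Bool) :=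
  {z | z.length = n + d - 3 ∧ IsPrefixNormal ([true, false] ++ z) ∧
    ([true, false] ++ z).count true = d}

theorem mem_tenExtensions_iff_of_expand_eq {n d : ℕ} {w z : List Bool}
    (h : expand w = [true, false] ++ z ++ [false]) (hnd : 3 ≤ n + d) :
    z ∈ tenExtensions n d ↔ w ∈ prefixNormalWords n d := by
  have hcount : w.count true = ([true, false] ++ z).count true := by
    simpa using congrArg (List.count true) h
  have hlen : w.length + w.count true = z.length + 3 := by simpa using congrArg List.length h
  have hpn : IsPrefixNormal w ↔ IsPrefixNormal ([true, false] ++ z) := by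
    rw [← isPrefixNormal_expand_iff, h, isPrefixNormal_append_false_iff]
  simp only [tenExtensions, prefixNormalWords, Set.mem_ofPred_eq, hpn, ← hcount]
  constructor
  · rintro ⟨hl, hp, hc⟩
    exact ⟨by omega, hc, hp⟩
  · rintro ⟨hl, hc, hp⟩
    exact ⟨by omega, hp, hc⟩

theorem expand_image_prefixNormalWords {n d : ℕ} (hd : 1 ≤ d) (hnd : 3 ≤ n + d) :
    expand '' prefixNormalWords n d =
      (fun z => [true, false] ++ z ++ [false]) '' tenExtensions n d := by
  ext x
  constructor
  · rintro ⟨w, hw, rfl⟩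
    obtain ⟨hlen, hcount, hpn⟩ := hw
    have hd_le : d ≤ n := hlen ▸ hcount ▸ List.count_le_length
    obtain ⟨t, rfl⟩ := hpn.exists_eq_true_cons (List.count_pos_iff.1 (by omega))
    obtain ⟨z, hz⟩ := expand_eq_append_false (v := t) (by rintro rfl; simp at hlen; omega)
    have hwz : expand (true :: t) = [true, false] ++ z ++ [false] := by simp [expand, hz]
    exact ⟨z, (mem_tenExtensions_iff_of_expand_eq hwz hnd).2 ⟨hlen, hcount, hpn⟩, hwz.symm⟩
  · rintro ⟨z, hz, rfl⟩
    obtain ⟨w, hw⟩ := exists_expand_eq_append_false hz.2.1.not_infix_true_true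
    exact ⟨w, (mem_tenExtensions_iff_of_expand_eq hw hnd).1 hz, hw⟩

-- Here `n + d - 3` truncates to `0`, and `expand [true] = [true, false]` has no trailing `0`.
theorem tenExtensions_one_one : tenExtensions 1 1 = {[]} := by
  have h10 : IsPrefixNormal [true, false] :=
    isPrefixNormal_append_false_iff (x := [true]) |>.2 isPrefixNormal_true
  ext z
  simp only [tenExtensions, Set.mem_ofPred_eq, Set.mem_singleton_iff]
  constructor
  · rintro ⟨hz, -, -⟩
    simpa using hz
  · rintro rfl
    exact ⟨rfl, h10, rfl⟩

theorem prefixNormalWords_one_one : prefixNormalWords 1 1 = {[true]} := by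
  ext w
  simp only [prefixNormalWords, Set.mem_ofPred_eq, Set.mem_singleton_iff, List.length_eq_one_iff]
  constructor
  · rintro ⟨⟨b, rfl⟩, hb, -⟩
    cases b <;> simp_all
  · rintro rfl
    exact ⟨⟨true, rfl⟩, rfl, isPrefixNormal_true⟩

theorem ext_ten_eq_pnwd_general (n d : ℕ) (hn : 1 ≤ n) (hd1 : 1 ≤ d) :
    Nat.card {w' : List Bool // w'.length = n + d - 3 ∧
        IsPrefixNormal ([true, false] ++ w') ∧
        ([true, false] ++ w').count true = d} = pnwd n d := by
  change Nat.card (tenExtensions n d) = Nat.card (prefixNormalWords n d)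
  obtain ⟨rfl, rfl⟩ | hnd : (n = 1 ∧ d = 1) ∨ 3 ≤ n + d := by omega
  · simp [tenExtensions_one_one, prefixNormalWords_one_one]
  · have hwrap : Function.Injective fun z : List Bool => [true, false] ++ z ++ [false] :=
      fun a b h => by simpa using h
    rw [← Nat.card_image_of_injective expand_injective (prefixNormalWords n d),
      expand_image_prefixNormalWords hd1 hnd, Nat.card_image_of_injective hwrap]

theorem ext_ten_eq_pnwd (n d : ℕ) (hn : 1 ≤ n) (hd1 : 1 ≤ d) (hdn : d ≤ n) :
    Nat.card {w' : List Bool // w'.length = n + d - 3 ∧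
        IsPrefixNormal ([true, false] ++ w') ∧
        ([true, false] ++ w').count true = d} = pnwd n d :=
  ext_ten_eq_pnwd_general n d hn hd1
end

section
/- For all n ≥ 2, the number of binary words w' of length n such that the concatenation 1^(n−2)·0·0·w' is prefix normal equals 2^n − (n+1). -/
/-! For `K = n - 2`, the word `w'` is itself a window of length `K + 2`, and the prefix of that
length, `1^K 0 0`, has exactly `K` ones; so prefix normality forces `w'` to contain at most `K`
ones. Conversely `1^K x` is prefix normal as soon as `x` has at most `K` ones: a window inside `x`
has at most `K` ones while every prefix of length `≥ K` has at least `K`, and a window starting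
`s` places into the block of ones loses `s` ones against the prefix and gains at most `s` ones at
its end. Hence we count the words of length `n` with at least two zeros, `2^n - 1 - n` of them. -/

open List

theorem count_take_le_count_take_add_min {α : Type*} [BEq α] (x : List α) (c : α) (a b : ℕ) :
    (x.take b).count c ≤ (x.take a).count c + min (b - a) (x.count c) := by
  rcases le_total b a with hba | hab
  · exact ((take_prefix_take_left hba).count_le c).trans (Nat.le_add_right _ _)
  · obtain ⟨d, rfl⟩ := Nat.exists_eq_add_of_le hab
    rw [take_add, count_append, Nat.add_sub_cancel_left]
    refine Nat.add_le_add_left (le_min ?_ ?_) _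
    · exact count_le_length.trans (length_take_le _ _)
    · exact ((take_sublist _ _).trans (drop_sublist _ _)).count_le c

theorem isPrefixNormal_of_count_take_add_le {w : List Bool}
    (h : ∀ i L, (w.take (i + L)).count true ≤ (w.take i).count true + (w.take L).count true) :
    IsPrefixNormal w := by
  rintro u ⟨s, t, rfl⟩
  have := h s.length u.length
  rwa [take_left' length_append, append_assoc, take_left' rfl, count_append,
    Nat.add_le_add_iff_left, ← append_assoc] at this

theorem count_take_replicate_append {α : Type*} [BEq α] [LawfulBEq α] (K j : ℕ) (a : α)
    (x : List α) :
    ((replicate K a ++ x).take j).count a = min j K + (x.take (j - K)).count a := by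
  simp [take_append]

theorem isPrefixNormal_replicate_append {K : ℕ} {x : List Bool} (hx : x.count true ≤ K) :
    IsPrefixNormal (replicate K true ++ x) := by
  refine isPrefixNormal_of_count_take_add_le fun i L => ?_
  simp only [count_take_replicate_append]
  have h₁ := count_take_le_count_take_add_min x true (i - K) (i + L - K)
  have h₂ := count_take_le_count_take_add_min x true (L - K) (i + L - K)
  have h₃ := count_take_le_count_take_add_min x true 0 (i + L - K)
  rw [take_zero, count_nil] at h₃
  omega

theorem isPrefixNormal_replicate_append_false_false_iff {K : ℕ} {w : List Bool}
    (hw : w.length ≤ K + 2) :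
    IsPrefixNormal (replicate K true ++ [false, false] ++ w) ↔ w.count true ≤ K := by
  refine ⟨fun h => ?_, fun h => ?_⟩
  · have := h w (suffix_append _ _).isInfix
    rw [take_append_of_le_length (by simpa)] at this
    exact this.trans (((take_sublist _ _).count_le true).trans (by simp))
  · rw [append_assoc]
    exact isPrefixNormal_replicate_append (by simpa)

section Counting

variable {α : Type*}

instance finite_length_eq_and [Fintype α] (n : ℕ) (P : List α → Prop) :
    Finite {w : List α // w.length = n ∧ P w} :=
  Finite.of_injective (β := List.Vector α n) (fun w => ⟨w.1, w.2.1⟩)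
    fun _ _ h => Subtype.ext (congrArg List.Vector.toList h)

def consSigmaEquiv (n : ℕ) (P : List α → Prop) :
    {w : List α // w.length = n + 1 ∧ P w} ≃ Σ a : α, {w : List α // w.length = n ∧ P (a :: w)} where
  toFun
    | ⟨a :: w, h⟩ => ⟨a, w, by simpa using h⟩
  invFun p := ⟨p.1 :: p.2.1, by simpa using p.2.2⟩
  left_inv
    | ⟨_ :: _, _⟩ => rfl
  right_inv _ := rfl

theorem card_length_succ_and [Fintype α] (n : ℕ) (P : List α → Prop) :
    Nat.card {w : List α // w.length = n + 1 ∧ P w} =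
      ∑ a, Nat.card {w : List α // w.length = n ∧ P (a :: w)} := by
  rw [Nat.card_congr (consSigmaEquiv n P), Nat.card_sigma]

end Counting

theorem card_length_eq_and_le_count_false_succ (n k : ℕ) :
    Nat.card {w : List Bool // w.length = n + 1 ∧ k + 1 ≤ w.count false} =
      Nat.card {w : List Bool // w.length = n ∧ k + 1 ≤ w.count false} +
        Nat.card {w : List Bool // w.length = n ∧ k ≤ w.count false} := by
  simp [card_length_succ_and, count_cons]

theorem card_length_eq_bool (n : ℕ) : Nat.card {w : List Bool // w.length = n} = 2 ^ n := by
  rw [← List.Vector, Nat.card_eq_fintype_card, card_vector, Fintype.card_bool]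

theorem card_length_eq_and_one_le_count_false (n : ℕ) :
    Nat.card {w : List Bool // w.length = n ∧ 1 ≤ w.count false} = 2 ^ n - 1 := by
  induction n with
  | zero => exact @Nat.card_of_isEmpty _ ⟨fun ⟨w, hw, h⟩ => by simp_all⟩
  | succ n ih =>
    rw [card_length_eq_and_le_count_false_succ, ih]
    simp only [zero_le, and_true, card_length_eq_bool]
    have := n.one_le_two_pow
    omega

theorem card_length_eq_and_two_le_count_false (n : ℕ) :
    Nat.card {w : List Bool // w.length = n ∧ 2 ≤ w.count false} = 2 ^ n - (n + 1) := by
  induction n with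
  | zero => exact @Nat.card_of_isEmpty _ ⟨fun ⟨w, hw, h⟩ => by simp_all⟩
  | succ n ih =>
    rw [card_length_eq_and_le_count_false_succ, ih, card_length_eq_and_one_le_count_false]
    have := n.lt_two_pow_self
    omega

theorem ext_ones_zero_zero (n : ℕ) (hn : 2 ≤ n) :
    Nat.card {w' : List Bool // w'.length = n ∧
        IsPrefixNormal (List.replicate (n - 2) true ++ [false, false] ++ w')} =
      2 ^ n - (n + 1) := by
  have hiff : ∀ w : List Bool, w.length = n →
      (IsPrefixNormal (replicate (n - 2) true ++ [false, false] ++ w) ↔ 2 ≤ w.count false) := by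
    intro w hw
    rw [isPrefixNormal_replicate_append_false_false_iff (by omega)]
    have := count_true_add_count_false w
    omega
  rw [← card_length_eq_and_two_le_count_false]
  exact Nat.card_congr (Equiv.subtypeEquivRight fun w => and_congr_right (hiff w))
end

section
/- For all even n ≥ 2, the number of binary words w' of length n such that the concatenation (10)^(n/2)·w' is prefix normal equals F(n+2), where F is the Fibonacci sequence with F(1) = F(2) = 1 and F(m+2) = F(m+1) + F(m). -/
def NoAdjacentOnes (w : List Bool) : Prop :=
  w.IsChain fun a b => !(a && b)

@[simp] theorem noAdjacentOnes_nil : NoAdjacentOnes [] := List.isChain_nil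

@[simp] theorem noAdjacentOnes_singleton (b : Bool) : NoAdjacentOnes [b] :=
  List.isChain_singleton b

@[simp] theorem noAdjacentOnes_false_cons {w : List Bool} :
    NoAdjacentOnes (false :: w) ↔ NoAdjacentOnes w := by
  simp [NoAdjacentOnes, List.isChain_cons]

@[simp] theorem noAdjacentOnes_true_cons_cons {b : Bool} {w : List Bool} :
    NoAdjacentOnes (true :: b :: w) ↔ b = false ∧ NoAdjacentOnes (b :: w) := by
  simp [NoAdjacentOnes]

namespace NoAdjacentOnes

theorem of_cons {a : Bool} {w : List Bool} (h : NoAdjacentOnes (a :: w)) : NoAdjacentOnes w :=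
  (List.isChain_cons.mp h).2

theorem of_isInfix {u w : List Bool} (h : NoAdjacentOnes w) (hu : u <:+: w) : NoAdjacentOnes u :=
  List.IsChain.infix h hu

theorem two_mul_count_true_le : ∀ {w : List Bool}, NoAdjacentOnes w →
    2 * w.count true ≤ w.length + 1
  | [], _ => by simp
  | [b], _ => by cases b <;> simp
  | false :: w, h => by
      have := two_mul_count_true_le h.of_cons
      simp
      omega
  | true :: false :: w, h => by
      have := two_mul_count_true_le h.of_cons.of_cons
      simp
      omega
  | true :: true :: _, h => by simp at h

theorem of_not_infix {w : List Bool} (h : ¬ [true, true] <:+: w) : NoAdjacentOnes w := by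
  refine List.isChain_iff_forall_rel_of_append_cons_cons.mpr ?_
  rintro a b l₁ l₂ rfl
  cases a <;> cases b <;> simp
  exact h ⟨l₁, l₂, by simp⟩

end NoAdjacentOnes

theorem List.IsInfix.exists_take_eq {α : Type*} {u l : List α} (h : u <:+: l) :
    ∃ a, a + u.length ≤ l.length ∧ l.take (a + u.length) = l.take a ++ u := by
  obtain ⟨s, t, rfl⟩ := h
  exact ⟨s.length, by simp, by simp [List.take_append]⟩

def alternating (k : ℕ) : List Bool := (List.replicate k [true, false]).flatten

theorem alternating_succ (k : ℕ) : alternating (k + 1) = true :: false :: alternating k := rfl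

theorem length_alternating (k : ℕ) : (alternating k).length = 2 * k := by
  simp [alternating, mul_comm]

theorem count_true_take_alternating : ∀ {k i : ℕ}, i ≤ 2 * k →
    ((alternating k).take i).count true = (i + 1) / 2
  | 0, 0, _ | _ + 1, 0, _ => rfl
  | _ + 1, 1, _ => rfl
  | k + 1, i + 2, hi => by
      rw [alternating_succ, List.take_succ_cons, List.take_succ_cons, List.count_cons,
        List.count_cons, count_true_take_alternating (by omega)]
      simp
      omega

theorem count_true_alternating (k : ℕ) : (alternating k).count true = k := by
  have := count_true_take_alternating (k := k) le_rfl
  rw [← length_alternating, List.take_length, length_alternating] at this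
  omega

theorem noAdjacentOnes_alternating_append {w : List Bool} (h : NoAdjacentOnes w) :
    ∀ k, NoAdjacentOnes (alternating k ++ w)
  | 0 => h
  | k + 1 => by simpa [alternating_succ] using noAdjacentOnes_alternating_append h k

theorem count_true_take_alternating_append (k i : ℕ) (w : List Bool) :
    ((alternating k ++ w).take (2 * k + i)).count true = k + (w.take i).count true := by
  rw [← length_alternating, List.take_length_add_append, List.count_append,
    count_true_alternating]

theorem isPrefixNormal_alternating_append {k : ℕ} {w : List Bool} (hw : w.length ≤ 2 * k)
    (h : NoAdjacentOnes w) : IsPrefixNormal (alternating k ++ w) := by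
  intro u hu
  rcases le_or_gt u.length (2 * k) with hshort | hlong
  · have hu_sparse :=
      ((noAdjacentOnes_alternating_append h k).of_isInfix hu).two_mul_count_true_le
    rw [List.take_append_of_le_length (by rwa [length_alternating]),
      count_true_take_alternating hshort]
    omega
  · obtain ⟨j, hj⟩ : ∃ j, u.length = 2 * k + j := ⟨u.length - 2 * k, by omega⟩
    obtain ⟨a, ha, htake⟩ := hu.exists_take_eq
    rw [List.length_append, length_alternating] at ha
    have hstart : ((alternating k ++ w).take a).count true = (a + 1) / 2 := by
      rw [List.take_append_of_le_length (by rw [length_alternating]; omega),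
        count_true_take_alternating (by omega)]
    have hend : ((alternating k ++ w).take (a + u.length)).count true =
        k + (w.take j).count true + ((w.drop j).take a).count true := by
      rw [show a + u.length = 2 * k + (j + a) by omega, count_true_take_alternating_append,
        List.take_add, List.count_append, add_assoc]
    have hmid_sparse := (h.of_isInfix ((List.take_prefix a (w.drop j)).isInfix.trans
      (List.drop_suffix j w).isInfix)).two_mul_count_true_le
    have hmid_length : ((w.drop j).take a).length ≤ a := List.length_take_le _ _
    have hsplit := congrArg (List.count true) htake
    rw [List.count_append, hstart, hend] at hsplit
    rw [hj, count_true_take_alternating_append]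
    omega

theorem NoAdjacentOnes.of_isPrefixNormal_alternating_append {k : ℕ} {w : List Bool} (hk : 0 < k)
    (h : IsPrefixNormal (alternating k ++ w)) : NoAdjacentOnes w := by
  refine .of_not_infix fun hw => ?_
  have h11 := h _ (hw.trans (List.suffix_append _ w).isInfix)
  obtain ⟨k, rfl⟩ := Nat.exists_eq_add_of_lt hk
  simp [alternating_succ] at h11

theorem isPrefixNormal_alternating_append_iff {k : ℕ} {w : List Bool} (hk : 0 < k)
    (hw : w.length ≤ 2 * k) : IsPrefixNormal (alternating k ++ w) ↔ NoAdjacentOnes w :=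
  ⟨.of_isPrefixNormal_alternating_append hk, isPrefixNormal_alternating_append hw⟩

def noAdjacentOnesWords : ℕ → Finset (List Bool)
  | 0 => {[]}
  | 1 => {[false], [true]}
  | n + 2 => (noAdjacentOnesWords (n + 1)).image (false :: ·) ∪
      (noAdjacentOnesWords n).image (true :: false :: ·)

theorem mem_noAdjacentOnesWords : ∀ {n : ℕ} {w : List Bool},
    w ∈ noAdjacentOnesWords n ↔ w.length = n ∧ NoAdjacentOnes w
  | 0, [] | 0, _ :: _ | 1, [] | 1, [_] | 1, _ :: _ :: _ | _ + 2, [] => by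
      simp [noAdjacentOnesWords]
  | n + 2, [b] => by simp [noAdjacentOnesWords, mem_noAdjacentOnesWords]
  | n + 2, false :: b :: w => by
      simp [noAdjacentOnesWords, mem_noAdjacentOnesWords (n := n + 1)]
  | n + 2, true :: b :: w => by
      cases b <;> simp [noAdjacentOnesWords, mem_noAdjacentOnesWords (n := n)]

theorem card_noAdjacentOnesWords : ∀ n, (noAdjacentOnesWords n).card = Nat.fib (n + 2)
  | 0 => rfl
  | 1 => rfl
  | n + 2 => by
      rw [noAdjacentOnesWords, Finset.card_union_of_disjoint, Finset.card_image_of_injective,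
        Finset.card_image_of_injective, card_noAdjacentOnesWords (n + 1),
        card_noAdjacentOnesWords n, Nat.fib_add_two (n := n + 2), add_comm]
      · exact List.cons_injective.comp List.cons_injective
      · exact List.cons_injective
      · simp [Finset.disjoint_left]

theorem card_noAdjacentOnes (n : ℕ) :
    Nat.card {w : List Bool // w.length = n ∧ NoAdjacentOnes w} = Nat.fib (n + 2) := by
  rw [← card_noAdjacentOnesWords, ← Nat.card_eq_finsetCard]
  exact Nat.card_congr (Equiv.subtypeEquivRight fun _ => mem_noAdjacentOnesWords.symm)

theorem ext_alternating_even (n : ℕ) (hn : 2 ≤ n) (heven : Even n) :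
    Nat.card {w' : List Bool // w'.length = n ∧
        IsPrefixNormal ((List.replicate (n / 2) [true, false]).flatten ++ w')} =
      Nat.fib (n + 2) := by
  obtain ⟨k, rfl⟩ := heven
  rw [← card_noAdjacentOnes]
  exact Nat.card_congr (Equiv.subtypeEquivRight fun _ => and_congr_right fun hw =>
    isPrefixNormal_alternating_append_iff (by omega) (by omega))
end

section
/- Run-length rejection test: let w be a binary word written as a concatenation of maximal blocks B₁B₂⋯B_c, where block B_i = 1^(s_i)·0^(t_i) (with s_i, t_i the lengths of the maximal 1-run and following 0-run). If there exists an index i with 2 ≤ i ≤ c such that s_{i−1} + t_{i−1} + s_i ≤ s₁ + t₁ and s_{i−1} + s_i > s₁, then w is not prefix normal. -/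
/-! The factor `B_(i-1) 1^(s_i)` of `w` is no longer than `B_1`, so the prefix of `w` of the same
length lies inside `B_1` and has at most `s_1` ones, fewer than the `s_(i-1) + s_i` ones of the
factor. -/

open List

theorem not_isPrefixNormal_of_infix {u w : List Bool} (hu : u <:+: w)
    (h : (w.take u.length).count true < u.count true) : ¬ IsPrefixNormal w :=
  fun hw => (hw u hu).not_gt h

theorem List.count_take_le_of_prefix {α : Type*} [BEq α] {p l : List α} (hp : p <+: l)
    {n : ℕ} (hn : n ≤ p.length) (a : α) : (l.take n).count a ≤ p.count a :=
  (prefix_of_prefix_length_le (take_prefix n l) hp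
    ((length_take_le n l).trans hn)).sublist.count_le a

theorem List.head_prefix_flatten_map_range {α : Type*} (f : ℕ → List α) (c : ℕ) :
    f 0 <+: ((range (c + 1)).map f).flatten := by
  rw [range_succ_eq_map, map_cons, flatten_cons]
  exact prefix_append _ _

theorem List.append_infix_flatten_map_range {α : Type*} (f : ℕ → List α) (j m : ℕ) :
    f j ++ f (j + 1) <:+: ((range (j + 2 + m)).map f).flatten := by
  refine ⟨((range j).map f).flatten, ((range m).map fun x => f (j + 2 + x)).flatten, ?_⟩
  simp [range_add, range_succ, map_map, Function.comp_def]

theorem runLength_rejection_general (c : ℕ) (s t : ℕ → ℕ)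
    (i : ℕ) (hi2 : 2 ≤ i) (hic : i ≤ c)
    (hlen : s (i - 1) + t (i - 1) + s i ≤ s 1 + t 1)
    (hones : s 1 < s (i - 1) + s i) :
    ¬ IsPrefixNormal (((List.range c).map
        (fun j => List.replicate (s (j + 1)) true ++
          List.replicate (t (j + 1)) false)).flatten) := by
  obtain ⟨k, rfl⟩ : ∃ k, i = k + 2 := ⟨i - 2, by omega⟩
  obtain ⟨m, rfl⟩ : ∃ m, c = k + 2 + m := ⟨c - (k + 2), by omega⟩
  rw [show k + 2 - 1 = k + 1 by omega] at hlen hones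
  set block : ℕ → List Bool := fun j =>
    replicate (s (j + 1)) true ++ replicate (t (j + 1)) false
  -- `block j` is the paper's `B_(j+1)`, so `u` is `B_(i-1) 1^(s_i)`
  set u := block k ++ replicate (s (k + 2)) true
  have hu : u <:+: ((range (k + 2 + m)).map block).flatten :=
    ((prefix_append_right_inj (block k)).2 (prefix_append _ _)).isInfix.trans
      (append_infix_flatten_map_range block k m)
  have hulen : u.length ≤ (block 0).length := by
    simp only [u, block, length_append, length_replicate]; omega
  refine not_isPrefixNormal_of_infix hu ?_
  calc _ ≤ (block 0).count true := count_take_le_of_prefix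
          (by rw [show k + 2 + m = k + 1 + m + 1 by omega]
              exact head_prefix_flatten_map_range block (k + 1 + m)) hulen true
    _ = s 1 := by simp [block, count_replicate]
    _ < u.count true := by simpa [u, block, count_replicate] using hones

theorem runLength_rejection (c : ℕ) (hc : 1 ≤ c) (s t : ℕ → ℕ)
    (hblocks : ∀ i, 1 ≤ i → i ≤ c → 1 ≤ s i + t i)
    (hmax1 : ∀ i, 2 ≤ i → i ≤ c → 1 ≤ s i)
    (hmax0 : ∀ i, 1 ≤ i → i ≤ c - 1 → 1 ≤ t i)
    (i : ℕ) (hi2 : 2 ≤ i) (hic : i ≤ c)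
    (hlen : s (i - 1) + t (i - 1) + s i ≤ s 1 + t 1)
    (hones : s 1 < s (i - 1) + s i) :
    ¬ IsPrefixNormal (((List.range c).map
        (fun j => List.replicate (s (j + 1)) true ++
          List.replicate (t (j + 1)) false)).flatten) :=
  runLength_rejection_general c s t i hi2 hic hlen hones
end
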